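/- arXiv:2212.12200 — 4 statements merged into one kernel-verified Lean document; each statement's English description precedes it below -/
import Mathlib

section
/- If A(t) = Σ_{n≥0} a_n t^n is the formal power series with a_n = 2·3^n·(2n)!/(n!·(n+2)!), then A satisfies 27t²A(t)² + (1−18t)A(t) + 16t − 1 = 0. -/
open PowerSeries

private lemma fact_two_mul (n : ℕ) :
    (2*n).factorial = Nat.centralBinom n * n.factorial * n.factorial := by
  have h : (2*n).choose n * n.factorial * (2*n - n).factorial = (2*n).factorial :=
    Nat.choose_mul_factorial_mul_factorial (by omega)
  rw [show 2*n - n = n by omega] at h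
  rw [Nat.centralBinom_eq_two_mul_choose, ← h]

private lemma succ_mul_catalan (n : ℕ) :
    (n+1) * catalan n = Nat.centralBinom n := by
  rw [catalan_eq_centralBinom_div, Nat.mul_div_cancel' (Nat.succ_dvd_centralBinom n)]

/-- key coefficient identity -/
private lemma key (n : ℕ) :
    9 * (2 * 3 ^ n * ((2 * n).factorial : ℚ) /
        ((n.factorial : ℚ) * ((n + 2).factorial : ℚ))) =
      12 * 3 ^ n * (catalan n : ℚ) - 3 * 3 ^ n * (catalan (n+1) : ℚ) := by
  have hc1 : ((n : ℚ) + 1) * (catalan n : ℚ) = (Nat.centralBinom n : ℚ) := by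
    exact_mod_cast congrArg (Nat.cast : ℕ → ℚ) (succ_mul_catalan n)
  have hc2 : ((n : ℚ) + 2) * (catalan (n+1) : ℚ) = (Nat.centralBinom (n+1) : ℚ) := by
    have := congrArg (Nat.cast : ℕ → ℚ) (succ_mul_catalan (n+1))
    push_cast at this ⊢; linarith
  have hB : ((n : ℚ) + 1) * (Nat.centralBinom (n+1) : ℚ)
      = 2 * (2 * n + 1) * (Nat.centralBinom n : ℚ) := by
    exact_mod_cast congrArg (Nat.cast : ℕ → ℚ) (Nat.succ_mul_centralBinom_succ n)
  have hf1 : ((2*n).factorial : ℚ)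
      = (Nat.centralBinom n : ℚ) * (n.factorial : ℚ) * (n.factorial : ℚ) := by
    exact_mod_cast congrArg (Nat.cast : ℕ → ℚ) (fact_two_mul n)
  have hf2 : (((n+2).factorial : ℕ) : ℚ)
      = ((n : ℚ) + 2) * ((n : ℚ) + 1) * (n.factorial : ℚ) := by
    rw [show n + 2 = (n+1)+1 by ring, Nat.factorial_succ, Nat.factorial_succ]
    push_cast; ring
  have h0 : (n.factorial : ℚ) ≠ 0 := Nat.cast_ne_zero.mpr (Nat.factorial_ne_zero n)
  have h1 : ((n : ℚ) + 1) ≠ 0 := by positivity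
  have h2 : ((n : ℚ) + 2) ≠ 0 := by positivity
  have hq1 : (catalan n : ℚ) = (Nat.centralBinom n : ℚ) / ((n:ℚ)+1) := by
    rw [eq_div_iff h1]; linarith [hc1]
  have hq2 : (catalan (n+1) : ℚ) = (Nat.centralBinom (n+1) : ℚ) / ((n:ℚ)+2) := by
    rw [eq_div_iff h2]; linarith [hc2]
  have hq3 : (Nat.centralBinom (n+1) : ℚ)
      = 2 * (2 * (n:ℚ) + 1) * (Nat.centralBinom n : ℚ) / ((n:ℚ)+1) := by
    rw [eq_div_iff h1]; linarith [hB]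
  rw [hf1, hf2, hq1, hq2, hq3]
  field_simp
  ring

/-- The formal power series `A(t) = Σ_{n≥0} a_n t^n` over `ℚ` with
`a_n = 2·3^n·(2n)!/(n!·(n+2)!)` satisfies Tutte's algebraic equation
`27 t² A(t)² + (1 − 18 t) A(t) + 16 t − 1 = 0`. -/
theorem tutte_equation_for_map_series :
    let A : PowerSeries ℚ := PowerSeries.mk fun n =>
      2 * 3 ^ n * (Nat.factorial (2 * n)) /
        (Nat.factorial n * Nat.factorial (n + 2))
    27 * X ^ 2 * A ^ 2 + (1 - 18 * X) * A + 16 * X - 1 = 0 := by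
  intro A
  set g : ℚ⟦X⟧ := PowerSeries.mk fun n => 3 ^ n * (catalan n : ℚ) with hgdef
  have e3 : (PowerSeries.C (R := ℚ)) 3 = (3 : ℚ⟦X⟧) := map_ofNat _ 3
  have e9 : (PowerSeries.C (R := ℚ)) 9 = (9 : ℚ⟦X⟧) := map_ofNat _ 9
  have e12 : (PowerSeries.C (R := ℚ)) 12 = (12 : ℚ⟦X⟧) := map_ofNat _ 12
  have hg : g = 1 + X * (C (R := ℚ) 3 * (g * g)) := by
    ext n
    cases n with
    | zero => simp [hgdef]
    | succ n =>
      rw [map_add, PowerSeries.coeff_succ_X_mul, PowerSeries.coeff_C_mul,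
        PowerSeries.coeff_mul]
      simp only [hgdef, coeff_mk, PowerSeries.coeff_one]
      rw [Finset.Nat.sum_antidiagonal_eq_sum_range_succ
        (f := fun i j => ((3:ℚ)^i * catalan i) * (3^j * catalan j))]
      have : ∀ i ∈ Finset.range (n+1),
          ((3:ℚ)^i * catalan i) * (3^(n-i) * catalan (n-i))
            = 3^n * (catalan i * catalan (n-i)) := by
        intro i hi
        rw [Finset.mem_range] at hi
        rw [show (3:ℚ)^i * catalan i * (3^(n-i) * catalan (n-i))
            = (3^i * 3^(n-i)) * (catalan i * catalan (n-i)) by ring,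
          ← pow_add, show i + (n - i) = n by omega]
      rw [Finset.sum_congr rfl this, ← Finset.mul_sum]
      have hcs : ((catalan (n+1) : ℚ)) = ∑ i ∈ Finset.range (n+1),
          ((catalan i : ℚ) * (catalan (n-i) : ℚ)) := by
        rw_mod_cast [catalan_succ' n,
          Finset.Nat.sum_antidiagonal_eq_sum_range_succ (f := fun i j => catalan i * catalan j)]
      rw [← hcs]
      push_cast
      ring
  have hu : X * (C (R := ℚ) 9 * A) = 1 - g + X * (C (R := ℚ) 12 * g) := by
    ext n
    cases n with
    | zero => simp [hgdef, A]
    | succ n =>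
      rw [map_add, map_sub, PowerSeries.coeff_succ_X_mul, PowerSeries.coeff_succ_X_mul,
        PowerSeries.coeff_C_mul, PowerSeries.coeff_C_mul]
      simp only [hgdef, A, coeff_mk, PowerSeries.coeff_one]
      rw [if_neg (Nat.succ_ne_zero n)]
      have := key n
      push_cast at this ⊢
      linear_combination this
  rw [e3] at hg
  rw [e9, e12] at hu
  have hX : (81 : ℚ⟦X⟧) * X ^ 2 ≠ 0 := by
    apply mul_ne_zero
    · intro h
      have h2 := congrArg (constantCoeff (R := ℚ)) h
      simp only [map_ofNat, map_zero] at h2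
      norm_num at h2
    · exact pow_ne_zero 2 X_ne_zero
  apply mul_left_cancel₀ hX
  rw [mul_zero]
  linear_combination (27*X^2*(9*X*A + 1 - g + 12*X*g) + 9*X*(1-18*X)) * hu
    - (9*X*(12*X-1)^2) * hg
end

section
/- Every permutation σ ∈ 𝔖_n admits a unique decomposition into stabilized-interval-free (SIF) blocks, and consequently the exponential-type generating functions satisfy S(t) = I(t·S(t)), where S(t) = Σ_{n≥0} n! t^n and I(t) = Σ_{n≥0} I_n t^n with I_n the number of SIF permutations of [n]. -/
open PowerSeries

/-- The interval `[a..b]` inside `Fin n`, as a finset. -/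
def finInterval (n a b : ℕ) : Finset (Fin n) :=
  Finset.univ.filter fun i : Fin n => a ≤ (i : ℕ) ∧ (i : ℕ) ≤ b

/-- A permutation `σ` of `[1..n]` is *stabilized-interval-free* (SIF) if
`σ([a..b]) ≠ [a..b]` for every proper (nonempty) subinterval `[a..b] ⊊ [1..n]`. -/
def IsSIF {n : ℕ} (σ : Equiv.Perm (Fin n)) : Prop :=
  ∀ a b : ℕ, a ≤ b → b < n → ¬(a = 0 ∧ b + 1 = n) →
    Finset.image σ (finInterval n a b) ≠ finInterval n a b

/-- The number of SIF permutations of `[1..n]`. -/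
noncomputable def sifCount (n : ℕ) : ℕ :=
  Nat.card {σ : Equiv.Perm (Fin n) // IsSIF σ}

/-- Composition `F(G(t))` of formal power series, valid when `G` has zero constant
term. -/
noncomputable def psComp (F G : PowerSeries ℚ) : PowerSeries ℚ :=
  PowerSeries.mk fun n =>
    ∑ k ∈ Finset.range (n + 1),
      PowerSeries.coeff k F * PowerSeries.coeff n (G ^ k)

namespace SIFAux

open Finset Equiv

variable {n : ℕ}

lemma mem_finInterval {x : Fin n} {a b : ℕ} :
    x ∈ finInterval n a b ↔ a ≤ (x : ℕ) ∧ (x : ℕ) ≤ b := by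
  simp [finInterval]

/-- Membership formulation of "σ stabilizes the interval `[a..b]`". -/
def Stab (σ : Equiv.Perm (Fin n)) (a b : ℕ) : Prop :=
  ∀ x : Fin n, a ≤ (x : ℕ) → (x : ℕ) ≤ b → a ≤ (σ x : ℕ) ∧ (σ x : ℕ) ≤ b

lemma stab_iff_image {σ : Equiv.Perm (Fin n)} {a b : ℕ} :
    Stab σ a b ↔ Finset.image σ (finInterval n a b) = finInterval n a b := by
  constructor
  · intro h
    apply Finset.eq_of_subset_of_card_le
    · intro y hy
      rcases Finset.mem_image.mp hy with ⟨x, hx, rfl⟩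
      rcases mem_finInterval.mp hx with ⟨h1, h2⟩
      exact mem_finInterval.mpr (h x h1 h2)
    · rw [Finset.card_image_of_injective _ σ.injective]
  · intro h x h1 h2
    have : σ x ∈ finInterval n a b := by
      rw [← h]; exact Finset.mem_image_of_mem _ (mem_finInterval.mpr ⟨h1, h2⟩)
    exact mem_finInterval.mp this

lemma Stab.inv {σ : Equiv.Perm (Fin n)} {a b : ℕ} (h : Stab σ a b) : Stab σ⁻¹ a b := by
  intro x h1 h2
  have himg := stab_iff_image.mp h
  have hx : x ∈ finInterval n a b := mem_finInterval.mpr ⟨h1, h2⟩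
  rw [← himg] at hx
  rcases Finset.mem_image.mp hx with ⟨y, hy, hyx⟩
  have : σ⁻¹ x = y := by rw [← hyx]; simp
  rw [this]
  exact mem_finInterval.mp hy

lemma Stab.union {σ : Equiv.Perm (Fin n)} {a b c d : ℕ} (h1 : Stab σ a b) (h2 : Stab σ c d)
    (hac : a ≤ c) (hcb : c ≤ b + 1) : Stab σ a (max b d) := by
  intro x hx1 hx2
  by_cases hxb : (x : ℕ) ≤ b
  · rcases h1 x hx1 hxb with ⟨g1, g2⟩
    exact ⟨g1, g2.trans (le_max_left _ _)⟩
  · push_neg at hxb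
    have hxc : c ≤ (x : ℕ) := by omega
    have hxd : (x : ℕ) ≤ d := by
      rcases max_cases b d with ⟨he, _⟩ | ⟨he, _⟩ <;> omega
    rcases h2 x hxc hxd with ⟨g1, g2⟩
    exact ⟨hac.trans g1, g2.trans (le_max_right _ _)⟩

lemma Stab.compl {σ : Equiv.Perm (Fin n)} {c : ℕ} (h : Stab σ 0 c) :
    Stab σ (c + 1) (n - 1) := by
  intro x hx1 _
  have hle : (σ x : ℕ) ≤ n - 1 := by have := (σ x).isLt; omega
  refine ⟨?_, hle⟩
  by_contra hcon
  push_neg at hcon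
  have := (h.inv (σ x) (Nat.zero_le _) (by omega)).2
  simp at this
  omega

/-- `x` is "bad" if it lies in a proper stabilized interval avoiding `0`. -/
def Bad (σ : Equiv.Perm (Fin n)) (x : Fin n) : Prop :=
  ∃ a b : ℕ, 1 ≤ a ∧ b < n ∧ Stab σ a b ∧ a ≤ (x : ℕ) ∧ (x : ℕ) ≤ b

lemma not_bad_zero {σ : Equiv.Perm (Fin n)} {x : Fin n} (hx : (x : ℕ) = 0) : ¬ Bad σ x := by
  rintro ⟨a, b, ha, _, _, hax, _⟩
  omega

lemma Bad.apply {σ : Equiv.Perm (Fin n)} {x : Fin n} (h : Bad σ x) : Bad σ (σ x) := by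
  obtain ⟨a, b, ha, hb, hs, h1, h2⟩ := h
  exact ⟨a, b, ha, hb, hs, (hs x h1 h2).1, (hs x h1 h2).2⟩

lemma Bad.of_apply {σ : Equiv.Perm (Fin n)} {x : Fin n} (h : Bad σ (σ x)) : Bad σ x := by
  obtain ⟨a, b, ha, hb, hs, h1, h2⟩ := h
  have := hs.inv (σ x) h1 h2
  simp at this
  exact ⟨a, b, ha, hb, hs, this.1, this.2⟩

end SIFAux
namespace SIFAux

open Finset Equiv

variable {n : ℕ}

/-- Position of the `j`-th support element, given gap lengths `l`. -/
def sv (l : ℕ → ℕ) (j : ℕ) : ℕ := j + ∑ i ∈ Finset.range j, l i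

lemma sv_zero (l : ℕ → ℕ) : sv l 0 = 0 := by simp [sv]

lemma sv_succ (l : ℕ → ℕ) (j : ℕ) : sv l (j + 1) = sv l j + 1 + l j := by
  simp [sv, Finset.sum_range_succ]; ring

lemma sv_strictMono (l : ℕ → ℕ) : StrictMono (sv l) := by
  apply strictMono_nat_of_lt_succ
  intro j
  rw [sv_succ]; omega

lemma sv_mono (l : ℕ → ℕ) : Monotone (sv l) := (sv_strictMono l).monotone

section Build

variable {k : ℕ} {l : ℕ → ℕ}

/-- The order-preserving block decomposition `Σ j : Fin k, Fin (l j + 1) ≃ Fin n`. -/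
noncomputable def blockEquiv (h : sv l k = n) : (Σ j : Fin k, Fin (l j + 1)) ≃ Fin n := by
  apply Equiv.ofBijective (fun p => (⟨sv l p.1 + (p.2 : ℕ), by
    have h1 : sv l p.1 + (p.2 : ℕ) < sv l (p.1 + 1) := by
      rw [sv_succ]; have := p.2.isLt; omega
    have h2 : sv l ((p.1 : ℕ) + 1) ≤ sv l k := sv_mono l p.1.isLt
    omega⟩ : Fin n))
  rw [Fintype.bijective_iff_injective_and_card]
  constructor
  · rintro ⟨j, x⟩ ⟨j', x'⟩ heq
    simp only [Fin.mk.injEq] at heq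
    rcases lt_trichotomy (j : ℕ) (j' : ℕ) with hlt | heqj | hlt
    · exfalso
      have h1 : sv l j + (x : ℕ) < sv l ((j : ℕ) + 1) := by
        rw [sv_succ]; have := x.isLt; omega
      have h2 : sv l ((j : ℕ) + 1) ≤ sv l j' := sv_mono l hlt
      omega
    · have hj : j = j' := Fin.ext heqj
      subst hj
      have : (x : ℕ) = (x' : ℕ) := by omega
      exact Sigma.ext rfl (heq_of_eq (Fin.ext this))
    · exfalso
      have h1 : sv l j' + (x' : ℕ) < sv l ((j' : ℕ) + 1) := by
        rw [sv_succ]; have := x'.isLt; omega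
      have h2 : sv l ((j' : ℕ) + 1) ≤ sv l j := sv_mono l hlt
      omega
  · rw [Fintype.card_sigma, Fintype.card_fin]
    have : ∑ j : Fin k, (l (j : ℕ) + 1) = n := by
      rw [Fin.sum_univ_eq_sum_range (fun i => l i + 1), Finset.sum_add_distrib]
      simp only [Finset.sum_const, Finset.card_range, smul_eq_mul, mul_one]
      rw [← h]; simp [sv]; ring
    simp [this]

@[simp] lemma blockEquiv_apply (h : sv l k = n) (p : Σ j : Fin k, Fin (l j + 1)) :
    ((blockEquiv h p : Fin n) : ℕ) = sv l p.1 + (p.2 : ℕ) := rfl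

/-- The abstract block permutation: `0` of block `j` goes to `0` of block `π j`;
the rest of block `j` is permuted by `τ j`. -/
def blockPerm (π : Equiv.Perm (Fin k)) (τ : ∀ j : Fin k, Equiv.Perm (Fin (l (j : ℕ)))) :
    Equiv.Perm (Σ j : Fin k, Fin (l (j : ℕ) + 1)) where
  toFun p := if h : p.2 = 0 then ⟨π p.1, 0⟩ else ⟨p.1, Fin.succ (τ p.1 (p.2.pred h))⟩
  invFun p := if h : p.2 = 0 then ⟨π⁻¹ p.1, 0⟩ else ⟨p.1, Fin.succ ((τ p.1)⁻¹ (p.2.pred h))⟩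
  left_inv := by
    rintro ⟨j, x⟩
    by_cases h : x = 0
    · subst h
      dsimp only
      rw [dif_pos rfl]
      dsimp only
      rw [dif_pos rfl]
      exact congrArg (fun i : Fin k => (⟨i, 0⟩ : Σ j : Fin k, Fin (l (j : ℕ) + 1)))
        (π.symm_apply_apply j)
    · dsimp only
      rw [dif_neg h]
      dsimp only
      rw [dif_neg (Fin.succ_ne_zero _)]
      simp
  right_inv := by
    rintro ⟨j, x⟩
    by_cases h : x = 0
    · subst h
      dsimp only
      rw [dif_pos rfl]
      dsimp only
      rw [dif_pos rfl]
      exact congrArg (fun i : Fin k => (⟨i, 0⟩ : Σ j : Fin k, Fin (l (j : ℕ) + 1)))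
        (π.apply_symm_apply j)
    · dsimp only
      rw [dif_neg h]
      dsimp only
      rw [dif_neg (Fin.succ_ne_zero _)]
      simp

lemma blockPerm_zero (π : Equiv.Perm (Fin k)) (τ : ∀ j : Fin k, Equiv.Perm (Fin (l (j : ℕ))))
    (j : Fin k) : blockPerm π τ ⟨j, 0⟩ = ⟨π j, 0⟩ := by
  simp [blockPerm]

lemma blockPerm_succ (π : Equiv.Perm (Fin k)) (τ : ∀ j : Fin k, Equiv.Perm (Fin (l (j : ℕ))))
    (j : Fin k) (t : Fin (l (j : ℕ))) :
    blockPerm π τ ⟨j, Fin.succ t⟩ = ⟨j, Fin.succ (τ j t)⟩ := by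
  simp [blockPerm, Fin.succ_ne_zero]

/-- The permutation of `Fin n` built from SIF-block data. -/
noncomputable def buildPerm (h : sv l k = n) (π : Equiv.Perm (Fin k))
    (τ : ∀ j : Fin k, Equiv.Perm (Fin (l (j : ℕ)))) : Equiv.Perm (Fin n) :=
  ((blockEquiv h).symm.trans (blockPerm π τ)).trans (blockEquiv h)

lemma buildPerm_apply (h : sv l k = n) (π : Equiv.Perm (Fin k))
    (τ : ∀ j : Fin k, Equiv.Perm (Fin (l (j : ℕ)))) (p : Σ j : Fin k, Fin (l (j : ℕ) + 1)) :
    buildPerm h π τ (blockEquiv h p) = blockEquiv h (blockPerm π τ p) := by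
  simp [buildPerm]

lemma buildPerm_apply_zero (h : sv l k = n) (π : Equiv.Perm (Fin k))
    (τ : ∀ j : Fin k, Equiv.Perm (Fin (l (j : ℕ)))) (j : Fin k) :
    buildPerm h π τ (blockEquiv h ⟨j, 0⟩) = blockEquiv h ⟨π j, 0⟩ := by
  rw [buildPerm_apply, blockPerm_zero]

lemma buildPerm_apply_succ (h : sv l k = n) (π : Equiv.Perm (Fin k))
    (τ : ∀ j : Fin k, Equiv.Perm (Fin (l (j : ℕ)))) (j : Fin k) (t : Fin (l (j : ℕ))) :
    buildPerm h π τ (blockEquiv h ⟨j, Fin.succ t⟩) = blockEquiv h ⟨j, Fin.succ (τ j t)⟩ := by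
  rw [buildPerm_apply, blockPerm_succ]

/-- Every element of `Fin n` is in some block. -/
lemma exists_block (h : sv l k = n) (y : Fin n) :
    ∃ p : Σ j : Fin k, Fin (l (j : ℕ) + 1), y = blockEquiv h p :=
  ⟨(blockEquiv h).symm y, by simp⟩

end Build

end SIFAux
namespace SIFAux

open Finset Equiv

variable {n : ℕ}

/-- The core (SIF support) of `σ`: elements in no proper stabilized interval avoiding 0. -/
noncomputable def core (σ : Equiv.Perm (Fin n)) : Finset (Fin n) :=
  @Finset.filter _ (fun x => ¬ Bad σ x) (Classical.decPred _) Finset.univ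

lemma mem_core {σ : Equiv.Perm (Fin n)} {x : Fin n} : x ∈ core σ ↔ ¬ Bad σ x := by
  simp [core]

noncomputable def kk (σ : Equiv.Perm (Fin n)) : ℕ := (core σ).card

noncomputable def coreIso (σ : Equiv.Perm (Fin n)) : Fin (kk σ) ≃o core σ :=
  (core σ).orderIsoOfFin rfl

noncomputable def cElem (σ : Equiv.Perm (Fin n)) (j : Fin (kk σ)) : Fin n :=
  (coreIso σ j : Fin n)

lemma cElem_mem (σ : Equiv.Perm (Fin n)) (j : Fin (kk σ)) : cElem σ j ∈ core σ :=
  (coreIso σ j).2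

lemma cElem_strictMono (σ : Equiv.Perm (Fin n)) : StrictMono (cElem σ) := by
  intro i j h
  exact Subtype.coe_lt_coe.mpr ((coreIso σ).strictMono h)

lemma core_surj {σ : Equiv.Perm (Fin n)} {x : Fin n} (hx : x ∈ core σ) :
    ∃ j, cElem σ j = x :=
  ⟨(coreIso σ).symm ⟨x, hx⟩, by simp [cElem]⟩

noncomputable def nxt (σ : Equiv.Perm (Fin n)) (j : ℕ) : ℕ :=
  if h : j < kk σ then (cElem σ ⟨j, h⟩ : ℕ) else n

noncomputable def lgap (σ : Equiv.Perm (Fin n)) (j : ℕ) : ℕ := nxt σ (j + 1) - nxt σ j - 1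

lemma nxt_coe (σ : Equiv.Perm (Fin n)) (j : Fin (kk σ)) : nxt σ (j : ℕ) = (cElem σ j : ℕ) := by
  rw [nxt, dif_pos j.isLt]

lemma nxt_le (σ : Equiv.Perm (Fin n)) (j : ℕ) : nxt σ j ≤ n := by
  rw [nxt]
  split
  · exact (cElem σ _).isLt.le
  · exact le_rfl

lemma nxt_lt_succ {σ : Equiv.Perm (Fin n)} {j : ℕ} (h : j < kk σ) :
    nxt σ j < nxt σ (j + 1) := by
  simp only [nxt]
  rw [dif_pos h]
  by_cases h2 : j + 1 < kk σ
  · rw [dif_pos h2]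
    exact cElem_strictMono σ (show (⟨j, h⟩ : Fin (kk σ)) < ⟨j + 1, h2⟩ by
      simp [Fin.lt_def])
  · rw [dif_neg h2]
    exact (cElem σ _).isLt

lemma nxt_eq_of_ge {σ : Equiv.Perm (Fin n)} {j : ℕ} (h : kk σ ≤ j) : nxt σ j = n :=
  dif_neg (by omega)

lemma kk_pos {σ : Equiv.Perm (Fin n)} (hn : 0 < n) : 0 < kk σ := by
  have h0 : (⟨0, hn⟩ : Fin n) ∈ core σ := mem_core.mpr (not_bad_zero rfl)
  exact Finset.card_pos.mpr ⟨_, h0⟩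

lemma cElem_zero {σ : Equiv.Perm (Fin n)} (j : Fin (kk σ)) (hj : (j : ℕ) = 0) :
    (cElem σ j : ℕ) = 0 := by
  have hn : 0 < n := (cElem σ j).pos
  have h0 : (⟨0, hn⟩ : Fin n) ∈ core σ := mem_core.mpr (not_bad_zero rfl)
  obtain ⟨i, hi⟩ := core_surj h0
  have hji : j ≤ i := by
    rw [Fin.le_def]; omega
  have := (cElem_strictMono σ).monotone hji
  rw [hi] at this
  exact Nat.le_zero.mp this

lemma nxt_zero {σ : Equiv.Perm (Fin n)} (hn : 0 < n) : nxt σ 0 = 0 := by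
  rw [nxt, dif_pos (kk_pos hn)]
  exact cElem_zero _ rfl

lemma core_between {σ : Equiv.Perm (Fin n)} {x : Fin n} (hx : x ∈ core σ) {j : Fin (kk σ)}
    (h1 : nxt σ (j : ℕ) ≤ (x : ℕ)) (h2 : (x : ℕ) < nxt σ ((j : ℕ) + 1)) : x = cElem σ j := by
  obtain ⟨i, hi⟩ := core_surj hx
  rcases lt_trichotomy i j with hlt | heq | hlt
  · exfalso
    have := cElem_strictMono σ hlt
    rw [hi, nxt_coe] at *
    omega
  · rw [← hi, heq]
  · exfalso
    have hik : (j : ℕ) + 1 < kk σ := by have := i.isLt; have := Fin.lt_def.mp hlt; omega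
    have h3 : cElem σ ⟨(j : ℕ) + 1, hik⟩ ≤ cElem σ i := by
      apply (cElem_strictMono σ).monotone
      rw [Fin.le_def]
      exact Fin.lt_def.mp hlt
    rw [hi] at h3
    rw [nxt, dif_pos hik] at h2
    omega

lemma core_above {σ : Equiv.Perm (Fin n)} {x : Fin n} (hx : x ∈ core σ) {j : Fin (kk σ)}
    (h1 : nxt σ (j : ℕ) < (x : ℕ)) : nxt σ ((j : ℕ) + 1) ≤ (x : ℕ) := by
  by_contra hcon
  push_neg at hcon
  have := core_between hx (le_of_lt h1) hcon
  rw [this, nxt_coe] at h1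
  omega

lemma coverage (σ : Equiv.Perm (Fin n)) (x : Fin n) :
    ∃ j : Fin (kk σ), nxt σ (j : ℕ) ≤ (x : ℕ) ∧ (x : ℕ) < nxt σ ((j : ℕ) + 1) := by
  have hn : 0 < n := x.pos
  have hk : 0 < kk σ := kk_pos hn
  set F := Finset.filter (fun j : Fin (kk σ) => nxt σ (j : ℕ) ≤ (x : ℕ)) Finset.univ
  have hne : F.Nonempty := by
    refine ⟨⟨0, hk⟩, Finset.mem_filter.mpr ⟨Finset.mem_univ _, ?_⟩⟩
    simp [nxt_zero hn]
  refine ⟨F.max' hne, ?_, ?_⟩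
  · exact (Finset.mem_filter.mp (F.max'_mem hne)).2
  · by_cases hlt : ((F.max' hne : ℕ) + 1) < kk σ
    · by_contra hcon
      push_neg at hcon
      have hmem : (⟨(F.max' hne : ℕ) + 1, hlt⟩ : Fin (kk σ)) ∈ F :=
        Finset.mem_filter.mpr ⟨Finset.mem_univ _, hcon⟩
      have := F.le_max' _ hmem
      rw [Fin.le_def] at this
      simp at this
    · rw [nxt_eq_of_ge (by omega)]
      exact x.isLt

lemma gap_bad {σ : Equiv.Perm (Fin n)} {j : Fin (kk σ)} {y : Fin n}
    (h1 : nxt σ (j : ℕ) < (y : ℕ)) (h2 : (y : ℕ) < nxt σ ((j : ℕ) + 1)) : Bad σ y := by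
  by_contra hcon
  have hy : y ∈ core σ := mem_core.mpr hcon
  have := core_between hy (le_of_lt h1) h2
  rw [this, nxt_coe] at h1
  omega

/-- The key structural lemma: the gap between consecutive core elements is stabilized. -/
lemma gap_stab (σ : Equiv.Perm (Fin n)) (j : Fin (kk σ)) :
    Stab σ (nxt σ (j : ℕ) + 1) (nxt σ ((j : ℕ) + 1) - 1) := by
  intro x hx1 hx2
  set s := nxt σ (j : ℕ) with hs
  set N := nxt σ ((j : ℕ) + 1) with hN
  have hsN : s < N := nxt_lt_succ j.isLt
  have hNn : N ≤ n := nxt_le σ _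
  have hxbad : Bad σ x := gap_bad (j := j) (by omega) (by omega)
  -- the maximal stabilized interval around x
  set SA := {a : ℕ | 1 ≤ a ∧ ∃ b, b < n ∧ Stab σ a b ∧ a ≤ (x : ℕ) ∧ (x : ℕ) ≤ b} with hSA
  set SB := {b : ℕ | b < n ∧ ∃ a, 1 ≤ a ∧ Stab σ a b ∧ a ≤ (x : ℕ) ∧ (x : ℕ) ≤ b} with hSB
  obtain ⟨a0, b0, ha0, hb0, hst0, hax0, hxb0⟩ := hxbad
  have hSAne : SA.Nonempty := ⟨a0, ha0, b0, hb0, hst0, hax0, hxb0⟩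
  have hSBne : SB.Nonempty := ⟨b0, hb0, a0, ha0, hst0, hax0, hxb0⟩
  have hSBbdd : BddAbove SB := ⟨n, fun b hb => hb.1.le⟩
  set A := sInf SA with hA
  set B := sSup SB with hB
  obtain ⟨hA1, b1, hb1, hstA, hAx, hxb1⟩ := Nat.sInf_mem hSAne
  obtain ⟨hBn, a2, ha2, hstB, ha2x, hxB⟩ := Nat.sSup_mem hSBne hSBbdd
  have hb1B : b1 ≤ B := le_csSup hSBbdd ⟨hb1, A, hA1, hstA, hAx, hxb1⟩
  have hAa2 : A ≤ a2 := Nat.sInf_le ⟨ha2, B, hBn, hstB, ha2x, hxB⟩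
  have hstAB : Stab σ A B := by
    have := Stab.union hstA hstB hAa2 (by omega)
    rwa [max_eq_right hb1B] at this
  have hbadAB : ∀ y : Fin n, A ≤ (y : ℕ) → (y : ℕ) ≤ B → Bad σ y := fun y h1 h2 =>
    ⟨A, B, hA1, hBn, hstAB, h1, h2⟩
  -- A - 1 is not bad
  have hAx' : A ≤ (x : ℕ) := hAx
  have hnotbadA : ¬ Bad σ (⟨A - 1, by have := x.isLt; omega⟩ : Fin n) := by
    rintro ⟨a', b', ha', hb', hst', h1', h2'⟩
    dsimp only at h1' h2'
    have hub : Stab σ a' (max b' B) := Stab.union hst' hstAB (by omega) (by omega)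
    have : A ≤ a' := Nat.sInf_le ⟨ha', max b' B, by omega, hub, by omega,
      le_max_of_le_right hxB⟩
    omega
  -- B + 1 is not bad (if it is < n)
  have hnotbadB : ∀ (hBlt : B + 1 < n), ¬ Bad σ (⟨B + 1, hBlt⟩ : Fin n) := by
    intro hBlt
    rintro ⟨a', b', ha', hb', hst', h1', h2'⟩
    dsimp only at h1' h2'
    rcases le_total a' A with hle | hle
    · have hub : Stab σ a' (max b' B) := Stab.union hst' hstAB hle (by omega)
      rw [max_eq_left (by omega)] at hub
      have : b' ≤ B := le_csSup hSBbdd ⟨hb', a', ha', hub, by omega, by omega⟩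
      omega
    · have hub : Stab σ A (max B b') := Stab.union hstAB hst' hle (by omega)
      rw [max_eq_right (by omega)] at hub
      have : b' ≤ B := le_csSup hSBbdd ⟨hb', A, hA1, hub, by omega, by omega⟩
      omega
  -- conclude A = s + 1
  have hsval : nxt σ (j : ℕ) = (cElem σ j : ℕ) := nxt_coe σ j
  have hsA : s + 1 ≤ A := by
    by_contra hcon
    push_neg at hcon
    have hbad : Bad σ (cElem σ j) := hbadAB _ (by omega) (by omega)
    exact (mem_core.mp (cElem_mem σ j)) hbad
  have hAcore : (⟨A - 1, by have := x.isLt; omega⟩ : Fin n) ∈ core σ := mem_core.mpr hnotbadA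
  have hAeq : A = s + 1 := by
    have heq := core_between hAcore (j := j) (by dsimp only; omega)
      (by dsimp only; omega)
    have hval : A - 1 = (cElem σ j : ℕ) := congrArg Fin.val heq
    omega
  -- conclude B = N - 1
  have hBltN : B ≤ N - 1 := by
    by_contra hcon
    push_neg at hcon
    have hNB : N ≤ B := by omega
    have hNltn : N < n := by omega
    have hbadN : Bad σ (⟨N, hNltn⟩ : Fin n) :=
      hbadAB _ (by dsimp only; omega) (by dsimp only; omega)
    have hjk : (j : ℕ) + 1 < kk σ := by
      by_contra hc
      push_neg at hc
      rw [hN, nxt_eq_of_ge hc] at hNltn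
      omega
    have hmem : (⟨N, hNltn⟩ : Fin n) ∈ core σ := by
      have hm := cElem_mem σ ⟨(j : ℕ) + 1, hjk⟩
      have heq : cElem σ ⟨(j : ℕ) + 1, hjk⟩ = (⟨N, hNltn⟩ : Fin n) := by
        apply Fin.ext
        simp [hN, nxt, dif_pos hjk]
      rwa [heq] at hm
    exact (mem_core.mp hmem) hbadN
  have hBgeN : N - 1 ≤ B := by
    by_cases hc : B + 1 = n
    · omega
    · have hBlt : B + 1 < n := by omega
      have hBcore : (⟨B + 1, hBlt⟩ : Fin n) ∈ core σ := mem_core.mpr (hnotbadB hBlt)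
      have hub : nxt σ ((j : ℕ) + 1) ≤ B + 1 := by
        apply core_above hBcore
        dsimp only
        omega
      omega
  have hBeq : B = N - 1 := by omega
  rw [hAeq] at hstAB
  rw [hBeq] at hstAB
  exact hstAB x hx1 hx2

end SIFAux
namespace SIFAux

open Finset Equiv

variable {n : ℕ}

lemma nxt_mono (σ : Equiv.Perm (Fin n)) : Monotone (nxt σ) :=
  monotone_nat_of_le_succ fun j => by
    by_cases h : j < kk σ
    · exact (nxt_lt_succ h).le
    · rw [nxt_eq_of_ge (by omega), nxt_eq_of_ge (by omega)]

lemma sv_lgap (σ : Equiv.Perm (Fin n)) : ∀ j, j ≤ kk σ → sv (lgap σ) j = nxt σ j := by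
  intro j
  induction j with
  | zero =>
    intro _
    rw [sv_zero]
    by_cases h : 0 < kk σ
    · have hne : (core σ).Nonempty := Finset.card_pos.mp h
      obtain ⟨x, _⟩ := hne
      rw [nxt_zero x.pos]
    · have hkz : kk σ = 0 := by omega
      rw [nxt_eq_of_ge (by omega)]
      by_contra hne
      have hn : 0 < n := by omega
      have := kk_pos (σ := σ) hn
      omega
  | succ j ih =>
    intro hj
    have hjk : j < kk σ := by omega
    have h1 := nxt_lt_succ (σ := σ) hjk
    rw [sv_succ, ih (by omega), lgap]
    omega

lemma sv_lgap_top (σ : Equiv.Perm (Fin n)) : sv (lgap σ) (kk σ) = n := by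
  rw [sv_lgap σ _ le_rfl, nxt_eq_of_ge le_rfl]

lemma core_iff_apply_mem (σ : Equiv.Perm (Fin n)) :
    ∀ x, x ∈ core σ ↔ σ x ∈ core σ := fun x => by
  rw [mem_core, mem_core]
  exact ⟨fun h hb => h (Bad.of_apply hb), fun h hb => h (Bad.apply hb)⟩

/-- The permutation induced by `σ` on its core. -/
noncomputable def corePerm (σ : Equiv.Perm (Fin n)) : Equiv.Perm (Fin (kk σ)) :=
  ((coreIso σ).toEquiv.trans (σ.subtypePerm (fun x => (core_iff_apply_mem σ x).symm))).trans
    (coreIso σ).toEquiv.symm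

lemma cElem_corePerm (σ : Equiv.Perm (Fin n)) (j : Fin (kk σ)) :
    cElem σ (corePerm σ j) = σ (cElem σ j) := by
  have h1 : corePerm σ j = (coreIso σ).toEquiv.symm
      ((σ.subtypePerm (fun x => (core_iff_apply_mem σ x).symm)) ((coreIso σ).toEquiv j)) := rfl
  rw [h1]
  show ((coreIso σ).toEquiv ((coreIso σ).toEquiv.symm
      ((σ.subtypePerm (fun x => (core_iff_apply_mem σ x).symm)) ((coreIso σ).toEquiv j))) : Fin n) = _
  rw [Equiv.apply_symm_apply]
  rfl

section IntervalPerm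

/-- Auxiliary function for the permutation induced on a stabilized interval
`[a, a+m)`, renormalized to `Fin m`. -/
noncomputable def ipFun (σ : Equiv.Perm (Fin n)) (a m : ℕ) (ham : a + m ≤ n)
    (hst : ∀ x : Fin n, a ≤ (x : ℕ) → (x : ℕ) < a + m →
      a ≤ (σ x : ℕ) ∧ (σ x : ℕ) < a + m) : Fin m → Fin m := fun t =>
  ⟨(σ ⟨a + (t : ℕ), by have := t.isLt; omega⟩ : ℕ) - a, by
    have ht := t.isLt
    have := hst ⟨a + (t : ℕ), by omega⟩ (by dsimp; omega) (by dsimp; omega)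
    omega⟩

lemma ipFun_val (σ : Equiv.Perm (Fin n)) (a m : ℕ) (ham : a + m ≤ n)
    (hst : ∀ x : Fin n, a ≤ (x : ℕ) → (x : ℕ) < a + m →
      a ≤ (σ x : ℕ) ∧ (σ x : ℕ) < a + m) (t : Fin m) (h : a + (t : ℕ) < n) :
    a + ((ipFun σ a m ham hst t : Fin m) : ℕ) = (σ ⟨a + (t : ℕ), h⟩ : ℕ) := by
  show a + ((σ ⟨a + (t : ℕ), h⟩ : ℕ) - a) = (σ ⟨a + (t : ℕ), h⟩ : ℕ)
  have := hst ⟨a + (t : ℕ), h⟩ (by dsimp; omega) (by dsimp; omega)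
  omega

lemma ipFun_inj (σ : Equiv.Perm (Fin n)) (a m : ℕ) (ham : a + m ≤ n)
    (hst : ∀ x : Fin n, a ≤ (x : ℕ) → (x : ℕ) < a + m →
      a ≤ (σ x : ℕ) ∧ (σ x : ℕ) < a + m) :
    Function.Injective (ipFun σ a m ham hst) := by
  intro t t' heq
  have ht := t.isLt
  have ht' := t'.isLt
  have hlt : a + (t : ℕ) < n := by omega
  have hlt' : a + (t' : ℕ) < n := by omega
  have e1 := ipFun_val σ a m ham hst t hlt
  have e2 := ipFun_val σ a m ham hst t' hlt'
  have hv : ((ipFun σ a m ham hst t : Fin m) : ℕ) = ((ipFun σ a m ham hst t' : Fin m) : ℕ) :=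
    congrArg Fin.val heq
  have hσ : σ ⟨a + (t : ℕ), hlt⟩ = σ ⟨a + (t' : ℕ), hlt'⟩ := Fin.ext (by omega)
  have hinj := congrArg Fin.val (σ.injective hσ)
  dsimp at hinj
  exact Fin.ext (by omega)

/-- The permutation induced on a stabilized interval `[a, a+m)`, as a permutation
of `Fin m`. -/
noncomputable def intervalPerm (σ : Equiv.Perm (Fin n)) (a m : ℕ) (ham : a + m ≤ n)
    (hst : ∀ x : Fin n, a ≤ (x : ℕ) → (x : ℕ) < a + m →
      a ≤ (σ x : ℕ) ∧ (σ x : ℕ) < a + m) : Equiv.Perm (Fin m) :=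
  Equiv.ofBijective _ (Finite.injective_iff_bijective.mp (ipFun_inj σ a m ham hst))

lemma intervalPerm_val (σ : Equiv.Perm (Fin n)) (a m : ℕ) (ham : a + m ≤ n)
    (hst : ∀ x : Fin n, a ≤ (x : ℕ) → (x : ℕ) < a + m →
      a ≤ (σ x : ℕ) ∧ (σ x : ℕ) < a + m) (t : Fin m) (h : a + (t : ℕ) < n) :
    a + ((intervalPerm σ a m ham hst t : Fin m) : ℕ) = (σ ⟨a + (t : ℕ), h⟩ : ℕ) :=
  ipFun_val σ a m ham hst t h

end IntervalPerm

lemma gap_ham (σ : Equiv.Perm (Fin n)) (j : Fin (kk σ)) :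
    (nxt σ (j : ℕ) + 1) + lgap σ (j : ℕ) ≤ n := by
  have h1 := nxt_lt_succ (σ := σ) j.isLt
  have h2 := nxt_le σ ((j : ℕ) + 1)
  rw [lgap]
  omega

lemma gap_hst (σ : Equiv.Perm (Fin n)) (j : Fin (kk σ)) :
    ∀ x : Fin n, (nxt σ (j : ℕ) + 1) ≤ (x : ℕ) →
      (x : ℕ) < (nxt σ (j : ℕ) + 1) + lgap σ (j : ℕ) →
      (nxt σ (j : ℕ) + 1) ≤ (σ x : ℕ) ∧ (σ x : ℕ) < (nxt σ (j : ℕ) + 1) + lgap σ (j : ℕ) := by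
  intro x h1 h2
  have hlt := nxt_lt_succ (σ := σ) j.isLt
  have := gap_stab σ j x h1 (by rw [lgap] at h2; omega)
  rw [lgap]
  omega

/-- The permutation induced by `σ` on the gap after the `j`-th core element. -/
noncomputable def gapPerm (σ : Equiv.Perm (Fin n)) (j : Fin (kk σ)) :
    Equiv.Perm (Fin (lgap σ (j : ℕ))) :=
  intervalPerm σ (nxt σ (j : ℕ) + 1) (lgap σ (j : ℕ)) (gap_ham σ j) (gap_hst σ j)

/-- Reconstruction: `σ` is built from its core data. -/
theorem recover (σ : Equiv.Perm (Fin n)) :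
    buildPerm (sv_lgap_top σ) (corePerm σ) (gapPerm σ) = σ := by
  apply Equiv.ext
  intro y
  obtain ⟨⟨j, x⟩, rfl⟩ := exists_block (sv_lgap_top σ) y
  have hsvj : sv (lgap σ) (j : ℕ) = nxt σ (j : ℕ) := sv_lgap σ _ j.isLt.le
  induction x using Fin.cases with
  | zero =>
    rw [buildPerm_apply_zero]
    have h1 : blockEquiv (sv_lgap_top σ) ⟨j, 0⟩ = cElem σ j := by
      apply Fin.ext
      rw [blockEquiv_apply]
      simp [hsvj, nxt_coe]
    have h2 : blockEquiv (sv_lgap_top σ) ⟨corePerm σ j, 0⟩ = cElem σ (corePerm σ j) := by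
      apply Fin.ext
      rw [blockEquiv_apply]
      have : sv (lgap σ) ((corePerm σ j : ℕ)) = nxt σ ((corePerm σ j : ℕ)) :=
        sv_lgap σ _ (corePerm σ j).isLt.le
      simp [this, nxt_coe]
    rw [h1, h2, cElem_corePerm]
  | succ t =>
    rw [buildPerm_apply_succ]
    apply Fin.ext
    rw [blockEquiv_apply]
    have harg : blockEquiv (sv_lgap_top σ) ⟨j, Fin.succ t⟩ =
        (⟨(nxt σ (j : ℕ) + 1) + (t : ℕ), by
          have := gap_ham σ j; have := t.isLt; omega⟩ : Fin n) := by
      apply Fin.ext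
      rw [blockEquiv_apply]
      simp [hsvj, Fin.val_succ]
      omega
    rw [harg]
    have := intervalPerm_val σ (nxt σ (j : ℕ) + 1) (lgap σ (j : ℕ)) (gap_ham σ j)
      (gap_hst σ j) t (by have := gap_ham σ j; have := t.isLt; omega)
    simp only [Fin.val_succ, hsvj]
    rw [show (gapPerm σ j) t = intervalPerm σ (nxt σ (j : ℕ) + 1) (lgap σ (j : ℕ))
      (gap_ham σ j) (gap_hst σ j) t from rfl]
    omega

end SIFAux
namespace SIFAux

open Finset Equiv

variable {n : ℕ}

lemma nxt_pos {σ : Equiv.Perm (Fin n)} {a : ℕ} (ha : 1 ≤ a) (hak : a ≤ kk σ)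
    (hn : 0 < n) : 1 ≤ nxt σ a := by
  have h0 := nxt_zero (σ := σ) hn
  have h1 := nxt_lt_succ (σ := σ) (kk_pos hn)
  have h2 := nxt_mono σ (show 0 + 1 ≤ a by omega)
  omega

/-- The permutation induced on the core is stabilized-interval-free. -/
theorem isSIF_corePerm (σ : Equiv.Perm (Fin n)) : IsSIF (corePerm σ) := by
  intro a b hab hbk hprop himg
  have hstab : Stab (corePerm σ) a b := stab_iff_image.mpr himg
  have hak : a < kk σ := by omega
  have hn : 0 < n := (cElem σ ⟨a, hak⟩).pos
  set aN := nxt σ a with haN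
  set bN := nxt σ (b + 1) - 1 with hbN
  have hbb : nxt σ b < nxt σ (b + 1) := nxt_lt_succ hbk
  have habN : nxt σ a ≤ nxt σ b := nxt_mono σ hab
  -- the pulled-back interval [aN, bN] is stabilized by σ
  have SN : Stab σ aN bN := by
    intro x hx1 hx2
    obtain ⟨j, hj1, hj2⟩ := coverage σ x
    have hja : a ≤ (j : ℕ) := by
      by_contra hc
      push_neg at hc
      have : nxt σ ((j : ℕ) + 1) ≤ nxt σ a := nxt_mono σ (by omega)
      omega
    have hjb : (j : ℕ) ≤ b := by
      by_contra hc
      push_neg at hc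
      have : nxt σ (b + 1) ≤ nxt σ (j : ℕ) := nxt_mono σ (by omega)
      omega
    rcases eq_or_lt_of_le hj1 with heq | hlt
    · -- x is the core element j
      have hxe : x = cElem σ j := by
        apply Fin.ext
        rw [← nxt_coe]
        omega
      obtain ⟨hp1, hp2⟩ := hstab j hja hjb
      have hσx : (σ x : ℕ) = nxt σ ((corePerm σ j : ℕ)) := by
        rw [hxe, ← cElem_corePerm, nxt_coe]
      have hc1 : nxt σ a ≤ nxt σ ((corePerm σ j : ℕ)) := nxt_mono σ hp1
      have hc2 : nxt σ ((corePerm σ j : ℕ)) < nxt σ (b + 1) := by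
        calc nxt σ ((corePerm σ j : ℕ)) < nxt σ ((corePerm σ j : ℕ) + 1) :=
              nxt_lt_succ (corePerm σ j).isLt
          _ ≤ nxt σ (b + 1) := nxt_mono σ (by omega)
      omega
    · -- x is in the gap after core element j
      have hgap := gap_stab σ j x hlt (by
        have : nxt σ ((j : ℕ) + 1) ≤ nxt σ (b + 1) := nxt_mono σ (by omega)
        omega)
      have hc1 : nxt σ a ≤ nxt σ (j : ℕ) := nxt_mono σ hja
      have hc2 : nxt σ ((j : ℕ) + 1) ≤ nxt σ (b + 1) := nxt_mono σ (by omega)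
      omega
  by_cases ha : 1 ≤ a
  · -- the core element at index a would be bad
    have h1aN : 1 ≤ aN := nxt_pos ha (by omega) hn
    have hbadc : Bad σ (cElem σ ⟨a, hak⟩) := by
      refine ⟨aN, bN, h1aN, by have := nxt_le σ (b + 1); omega, SN, ?_, ?_⟩
      · rw [← nxt_coe]
      · rw [← nxt_coe]
        show nxt σ a ≤ bN
        omega
    exact mem_core.mp (cElem_mem σ ⟨a, hak⟩) hbadc
  · -- a = 0 : the complement is stabilized, making core element b+1 bad
    have ha0 : a = 0 := by omega
    have hbk1 : b + 1 < kk σ := by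
      rcases Nat.lt_or_ge (b + 1) (kk σ) with h | h
      · exact h
      · exfalso; exact hprop ⟨ha0, by omega⟩
    have SN0 : Stab σ 0 bN := by
      rw [haN, ha0, nxt_zero hn] at SN
      exact SN
    have SC := SN0.compl
    have hv : (cElem σ ⟨b + 1, hbk1⟩ : ℕ) = nxt σ (b + 1) := by rw [← nxt_coe]
    have hbadc : Bad σ (cElem σ ⟨b + 1, hbk1⟩) := by
      refine ⟨bN + 1, n - 1, by omega, by omega, SC, ?_, ?_⟩
      · have h1 : 1 ≤ nxt σ (b + 1) := nxt_pos (by omega) (by omega) hn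
        omega
      · have := (cElem σ ⟨b + 1, hbk1⟩).isLt
        omega
    exact mem_core.mp (cElem_mem σ ⟨b + 1, hbk1⟩) hbadc

end SIFAux
namespace SIFAux

open Finset Equiv

variable {n : ℕ}

section BuildCore

variable {k : ℕ} {l : ℕ → ℕ} (hsv : sv l k = n) (π : Equiv.Perm (Fin k))
  (τ : ∀ j : Fin k, Equiv.Perm (Fin (l (j : ℕ))))

/-- Block decomposition is determined by values. -/
lemma block_val_unique {j : Fin k} {p : Σ i : Fin k, Fin (l (i : ℕ) + 1)}
    (h1 : sv l (j : ℕ) + 1 ≤ sv l (p.1 : ℕ) + (p.2 : ℕ))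
    (h2 : sv l (p.1 : ℕ) + (p.2 : ℕ) ≤ sv l (j : ℕ) + l (j : ℕ)) : p.1 = j := by
  obtain ⟨i, y⟩ := p
  dsimp at h1 h2 ⊢
  have hy := y.isLt
  rcases lt_trichotomy (i : ℕ) (j : ℕ) with hlt | heq | hlt
  · exfalso
    have hs1 : sv l ((i : ℕ) + 1) ≤ sv l (j : ℕ) := sv_mono l hlt
    rw [sv_succ] at hs1
    omega
  · exact Fin.ext heq
  · exfalso
    have hs1 : sv l ((j : ℕ) + 1) ≤ sv l (i : ℕ) := sv_mono l hlt
    rw [sv_succ] at hs1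
    omega

/-- The gap after support element `j` is stabilized by the built permutation. -/
lemma build_gap_stab (j : Fin k) :
    Stab (buildPerm hsv π τ) (sv l (j : ℕ) + 1) (sv l (j : ℕ) + l (j : ℕ)) := by
  intro x hx1 hx2
  obtain ⟨p, rfl⟩ := exists_block hsv x
  rw [blockEquiv_apply] at hx1 hx2
  have hp1 : p.1 = j := block_val_unique hx1 hx2
  obtain ⟨i, y⟩ := p
  dsimp at hp1
  subst hp1
  have hy0 : y ≠ 0 := by
    intro h0
    rw [h0] at hx1
    dsimp only at hx1
    simp only [Fin.val_zero] at hx1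
    omega
  have hyrep : y = Fin.succ (y.pred hy0) := (Fin.succ_pred y hy0).symm
  rw [hyrep, buildPerm_apply_succ, blockEquiv_apply]
  have h1 := (τ i (y.pred hy0)).isLt
  simp only [Fin.val_succ]
  omega

/-- Gap elements of the built permutation are bad. -/
lemma build_gap_bad (j : Fin k) (t : Fin (l (j : ℕ))) :
    Bad (buildPerm hsv π τ) (blockEquiv hsv ⟨j, Fin.succ t⟩) := by
  refine ⟨sv l (j : ℕ) + 1, sv l (j : ℕ) + l (j : ℕ), by omega, ?_,
    build_gap_stab hsv π τ j, ?_, ?_⟩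
  · have h1 : sv l ((j : ℕ) + 1) ≤ sv l k := sv_mono l j.isLt
    rw [sv_succ] at h1
    omega
  · rw [blockEquiv_apply]
    simp [Fin.val_succ]
  · rw [blockEquiv_apply]
    have := t.isLt
    simp [Fin.val_succ]

/-- Support elements of the built permutation are not bad. -/
lemma build_zero_good (hπ : IsSIF π) (j : Fin k) :
    ¬ Bad (buildPerm hsv π τ) (blockEquiv hsv ⟨j, 0⟩) := by
  rintro ⟨a, b, ha, hb, hst, h1, h2⟩
  rw [blockEquiv_apply] at h1 h2
  simp only [Fin.val_zero, add_zero] at h1 h2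
  set J := Finset.filter (fun i : Fin k => a ≤ sv l (i : ℕ) ∧ sv l (i : ℕ) ≤ b) Finset.univ
    with hJ
  have hjJ : j ∈ J := Finset.mem_filter.mpr ⟨Finset.mem_univ _, h1, h2⟩
  have hne : J.Nonempty := ⟨j, hjJ⟩
  set i1 := J.min' hne
  set i2 := J.max' hne
  have hi1 : i1 ∈ J := J.min'_mem hne
  have hi2 : i2 ∈ J := J.max'_mem hne
  obtain ⟨-, hi1a, hi1b⟩ := Finset.mem_filter.mp hi1
  obtain ⟨-, hi2a, hi2b⟩ := Finset.mem_filter.mp hi2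
  have hstπ : Stab π (i1 : ℕ) (i2 : ℕ) := by
    intro y hy1 hy2
    have hyJ : y ∈ J := by
      refine Finset.mem_filter.mpr ⟨Finset.mem_univ _, ?_, ?_⟩
      · calc a ≤ sv l (i1 : ℕ) := hi1a
          _ ≤ sv l (y : ℕ) := sv_mono l hy1
      · calc sv l (y : ℕ) ≤ sv l (i2 : ℕ) := sv_mono l hy2
          _ ≤ b := hi2b
    obtain ⟨-, hya, hyb⟩ := Finset.mem_filter.mp hyJ
    have happ := buildPerm_apply_zero hsv π τ y
    have hval : ((buildPerm hsv π τ) (blockEquiv hsv ⟨y, 0⟩) : ℕ) = sv l ((π y : ℕ)) := by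
      rw [happ, blockEquiv_apply]
      simp
    have hbnd := hst (blockEquiv hsv ⟨y, 0⟩) (by rw [blockEquiv_apply]; simpa) 
      (by rw [blockEquiv_apply]; simpa)
    rw [hval] at hbnd
    have hπyJ : π y ∈ J := Finset.mem_filter.mpr ⟨Finset.mem_univ _, hbnd.1, hbnd.2⟩
    exact ⟨J.min'_le _ hπyJ, J.le_max' _ hπyJ⟩
  have hi1pos : 1 ≤ (i1 : ℕ) := by
    by_contra hc
    push_neg at hc
    have : sv l (i1 : ℕ) = 0 := by
      have : (i1 : ℕ) = 0 := by omega
      rw [this, sv_zero]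
    omega
  have hi1i2 : (i1 : ℕ) ≤ (i2 : ℕ) := J.min'_le _ hi2
  exact hπ (i1 : ℕ) (i2 : ℕ) hi1i2 i2.isLt (by omega) (stab_iff_image.mp hstπ)

variable (hπ : IsSIF π)

lemma build_core_eq (hπ : IsSIF π) :
    core (buildPerm hsv π τ) =
      Finset.image (fun j : Fin k => blockEquiv hsv ⟨j, 0⟩) Finset.univ := by
  ext x
  rw [mem_core, Finset.mem_image]
  constructor
  · intro hgood
    obtain ⟨⟨j, y⟩, rfl⟩ := exists_block hsv x
    refine ⟨j, Finset.mem_univ _, ?_⟩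
    congr 1
    by_contra hy0
    have hy0' : y ≠ 0 := fun h => hy0 (by rw [h])
    have hyrep : y = Fin.succ (y.pred hy0') := (Fin.succ_pred y hy0').symm
    rw [hyrep] at hgood
    exact hgood (build_gap_bad hsv π τ j (y.pred hy0'))
  · rintro ⟨j, -, rfl⟩
    exact build_zero_good hsv π τ hπ j

lemma build_kk (hπ : IsSIF π) : kk (buildPerm hsv π τ) = k := by
  rw [kk, build_core_eq hsv π τ hπ, Finset.card_image_of_injective _ ?_, Finset.card_univ,
    Fintype.card_fin]
  intro i j hij
  have := (blockEquiv hsv).injective hij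
  exact congrArg Sigma.fst this

lemma build_nxt (hπ : IsSIF π) : ∀ j : ℕ, j ≤ k → nxt (buildPerm hsv π τ) j = sv l j := by
  have hkk := build_kk hsv π τ hπ
  have hcard : (core (buildPerm hsv π τ)).card = k := hkk
  set f : Fin k → Fin n := fun i => blockEquiv hsv ⟨i, 0⟩ with hf
  have hmem : ∀ i, f i ∈ core (buildPerm hsv π τ) := by
    intro i
    rw [mem_core]
    exact build_zero_good hsv π τ hπ i
  have hmono : StrictMono f := by
    intro i j hij
    rw [Fin.lt_def, hf]
    simp only [blockEquiv_apply]
    have : sv l (i : ℕ) < sv l (j : ℕ) := sv_strictMono l hij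
    simpa
  have huniq := Finset.orderEmbOfFin_unique hcard hmem hmono
  intro j hj
  rcases eq_or_lt_of_le hj with rfl | hlt
  · rw [nxt_eq_of_ge (by omega), hsv]
  · have hjkk : j < kk (buildPerm hsv π τ) := by omega
    rw [nxt, dif_pos hjkk]
    have h1 : cElem (buildPerm hsv π τ) ⟨j, hjkk⟩ =
        (core (buildPerm hsv π τ)).orderEmbOfFin hcard ⟨j, hlt⟩ := by
      simp only [cElem, coreIso, Finset.coe_orderIsoOfFin_apply, Finset.orderEmbOfFin_apply,
        Finset.orderEmbOfFin_apply]
      simp [Fin.getElem_fin]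
      rfl
    rw [h1, ← huniq]
    rw [hf]
    simp only [blockEquiv_apply]
    simp
  
lemma build_lgap (hπ : IsSIF π) : ∀ j : ℕ, j < k → lgap (buildPerm hsv π τ) j = l j := by
  intro j hj
  rw [lgap, build_nxt hsv π τ hπ j (by omega), build_nxt hsv π τ hπ (j + 1) (by omega),
    sv_succ]
  omega

end BuildCore

end SIFAux
namespace SIFAux

open Finset Equiv

variable {n : ℕ}

/-- The gap-length data of `σ` as a finsupp. -/
noncomputable def lfs (σ : Equiv.Perm (Fin n)) : ℕ →₀ ℕ :=
  Finsupp.onFinset (Finset.range (kk σ)) (fun j => lgap σ j) (by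
    intro j hj
    rw [Finset.mem_range]
    by_contra hc
    push_neg at hc
    apply hj
    show lgap σ j = 0
    rw [lgap, nxt_eq_of_ge (by omega), nxt_eq_of_ge (by omega)]
    omega)

@[simp] lemma lfs_apply (σ : Equiv.Perm (Fin n)) (j : ℕ) : lfs σ j = lgap σ j := rfl

/-- The classifying data of a permutation: core size and gap lengths. -/
noncomputable def typeMap (σ : Equiv.Perm (Fin n)) : (_ : ℕ) × (ℕ →₀ ℕ) := ⟨kk σ, lfs σ⟩

/-- The index finset for the decomposition. -/
def T (n : ℕ) : Finset ((_ : ℕ) × (ℕ →₀ ℕ)) :=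
  (Finset.range (n + 1)).sigma fun k => Finset.finsuppAntidiag (Finset.range k) (n - k)

lemma sum_range_lgap (σ : Equiv.Perm (Fin n)) :
    kk σ + ∑ j ∈ Finset.range (kk σ), lgap σ j = n := by
  have := sv_lgap_top σ
  rw [sv] at this
  exact this

lemma kk_le (σ : Equiv.Perm (Fin n)) : kk σ ≤ n := by
  have := Finset.card_le_univ (core σ)
  simpa [kk] using this

lemma typeMap_mem (σ : Equiv.Perm (Fin n)) : typeMap σ ∈ T n := by
  rw [typeMap, T, Finset.mem_sigma, Finset.mem_range]
  dsimp only
  refine ⟨by have := kk_le σ; omega, ?_⟩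
  rw [Finset.mem_finsuppAntidiag]
  constructor
  · have h1 := sum_range_lgap σ
    have h2 : ∑ j ∈ Finset.range (kk σ), lfs σ j = ∑ j ∈ Finset.range (kk σ), lgap σ j :=
      Finset.sum_congr rfl fun j _ => rfl
    show ∑ j ∈ Finset.range (kk σ), lfs σ j = n - kk σ
    omega
  · exact Finsupp.support_onFinset_subset

lemma fiber_hsv (k : ℕ) (l : ℕ →₀ ℕ) (hk : k ≤ n)
    (hsum : ∑ j ∈ Finset.range k, l j = n - k) : sv (⇑l) k = n := by
  rw [sv, hsum]
  omega

/-- The decoding map onto a fiber of `typeMap`. -/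
noncomputable def fiberMap (k : ℕ) (l : ℕ →₀ ℕ) (hk : k ≤ n)
    (hsum : ∑ j ∈ Finset.range k, l j = n - k) (hsupp : l.support ⊆ Finset.range k) :
    {π : Equiv.Perm (Fin k) // IsSIF π} × (∀ j : Fin k, Equiv.Perm (Fin (l (j : ℕ)))) →
      {σ : Equiv.Perm (Fin n) // typeMap σ = ⟨k, l⟩} := fun x =>
  ⟨buildPerm (fiber_hsv k l hk hsum) x.1.1 x.2, by
    have hkk := build_kk (fiber_hsv k l hk hsum) x.1.1 x.2 x.1.2
    have hlf : lfs (buildPerm (fiber_hsv k l hk hsum) x.1.1 x.2) = l := by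
      apply Finsupp.ext
      intro j
      rw [lfs_apply]
      by_cases hj : j < k
      · exact build_lgap (fiber_hsv k l hk hsum) x.1.1 x.2 x.1.2 j hj
      · rw [lgap, nxt_eq_of_ge (by omega), nxt_eq_of_ge (by omega)]
        have hns : j ∉ l.support := fun hc => hj (Finset.mem_range.mp (hsupp hc))
        rw [Finsupp.notMem_support_iff.mp hns]
        omega
    rw [typeMap]
    exact Sigma.ext hkk (by rw [hlf, hkk])⟩

lemma fiberMap_bij (k : ℕ) (l : ℕ →₀ ℕ) (hk : k ≤ n)
    (hsum : ∑ j ∈ Finset.range k, l j = n - k) (hsupp : l.support ⊆ Finset.range k) :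
    Function.Bijective (fiberMap k l hk hsum hsupp) := by
  constructor
  · rintro ⟨⟨π, hπ⟩, τ⟩ ⟨⟨π', hπ'⟩, τ'⟩ heq
    have hE : buildPerm (fiber_hsv k l hk hsum) π τ = buildPerm (fiber_hsv k l hk hsum) π' τ' :=
      congrArg Subtype.val heq
    have hππ' : π = π' := by
      apply Equiv.ext
      intro j
      have h1 := buildPerm_apply_zero (fiber_hsv k l hk hsum) π τ j
      have h2 := buildPerm_apply_zero (fiber_hsv k l hk hsum) π' τ' j
      rw [hE] at h1
      have h3 := (blockEquiv (fiber_hsv k l hk hsum)).injective (h1.symm.trans h2)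
      exact congrArg Sigma.fst h3
    subst hππ'
    have hττ' : τ = τ' := by
      funext j
      apply Equiv.ext
      intro t
      have h1 := buildPerm_apply_succ (fiber_hsv k l hk hsum) π τ j t
      have h2 := buildPerm_apply_succ (fiber_hsv k l hk hsum) π τ' j t
      rw [hE] at h1
      have h3 := (blockEquiv (fiber_hsv k l hk hsum)).injective (h1.symm.trans h2)
      have h4 : HEq (Fin.succ (τ j t)) (Fin.succ (τ' j t)) := (Sigma.mk.inj_iff.mp h3).2
      have h5 : Fin.succ (τ j t) = Fin.succ (τ' j t) := eq_of_heq h4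
      exact Fin.succ_injective _ h5
    rw [hττ']
  · rintro ⟨σ, hσ⟩
    rw [typeMap] at hσ
    have hk2 : kk σ = k := congrArg Sigma.fst hσ
    have hl2 : lfs σ = l := eq_of_heq (Sigma.mk.inj_iff.mp hσ).2
    suffices h : ∃ (π : Equiv.Perm (Fin k)) (_ : IsSIF π)
        (τ : ∀ j : Fin k, Equiv.Perm (Fin (l (j : ℕ)))),
        buildPerm (fiber_hsv k l hk hsum) π τ = σ by
      obtain ⟨π, hπ, τ, hbp⟩ := h
      exact ⟨⟨⟨π, hπ⟩, τ⟩, Subtype.ext hbp⟩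
    obtain rfl : k = kk σ := hk2.symm
    have hfun : ⇑l = lgap σ := by
      funext j
      rw [← hl2, lfs_apply]
    suffices h : ∀ (f : ℕ → ℕ) (hf : f = lgap σ) (hsv : sv f (kk σ) = n),
        ∃ (π : Equiv.Perm (Fin (kk σ))) (_ : IsSIF π)
          (τ : ∀ j : Fin (kk σ), Equiv.Perm (Fin (f (j : ℕ)))),
          buildPerm hsv π τ = σ by
      exact h ⇑l hfun (fiber_hsv (kk σ) l hk hsum)
    intro f hf hsv
    subst hf
    exact ⟨corePerm σ, isSIF_corePerm σ, gapPerm σ, recover σ⟩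

lemma fiber_card (k : ℕ) (l : ℕ →₀ ℕ) (hk : k ≤ n)
    (hsum : ∑ j ∈ Finset.range k, l j = n - k) (hsupp : l.support ⊆ Finset.range k) :
    Nat.card {σ : Equiv.Perm (Fin n) // typeMap σ = ⟨k, l⟩} =
      sifCount k * ∏ j : Fin k, Nat.factorial (l (j : ℕ)) := by
  rw [← Nat.card_congr (Equiv.ofBijective _ (fiberMap_bij k l hk hsum hsupp))]
  rw [Nat.card_prod]
  congr 1
  rw [Nat.card_pi]
  apply Finset.prod_congr rfl
  intro j _
  rw [Nat.card_eq_fintype_card, Fintype.card_perm, Fintype.card_fin]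

end SIFAux
namespace SIFAux

open Finset Equiv

/-- **The master counting identity**: Beissinger's SIF-block decomposition. -/
lemma key (n : ℕ) : Nat.factorial n = ∑ k ∈ Finset.range (n + 1), sifCount k *
    ∑ l ∈ Finset.finsuppAntidiag (Finset.range k) (n - k),
      ∏ j : Fin k, Nat.factorial (l (j : ℕ)) := by
  classical
  have h1 : (Finset.univ : Finset (Equiv.Perm (Fin n))).card = ∑ x ∈ T n,
      (Finset.univ.filter fun σ => typeMap σ = x).card :=
    Finset.card_eq_sum_card_fiberwise fun σ _ => typeMap_mem σ
  have h2 : ∀ x ∈ T n,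
      (Finset.univ.filter fun σ : Equiv.Perm (Fin n) => typeMap σ = x).card
        = sifCount x.1 * ∏ j : Fin x.1, Nat.factorial (x.2 (j : ℕ)) := by
    rintro ⟨k, l⟩ hx
    rw [T, Finset.mem_sigma, Finset.mem_range] at hx
    dsimp only at hx ⊢
    obtain ⟨hk, hl⟩ := hx
    rw [Finset.mem_finsuppAntidiag] at hl
    rw [← fiber_card k l (by omega) hl.1 hl.2, Nat.card_eq_fintype_card,
      Fintype.card_subtype]
  have h3 : Nat.factorial n = ∑ x ∈ T n,
      sifCount x.1 * ∏ j : Fin x.1, Nat.factorial (x.2 (j : ℕ)) := by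
    rw [← Finset.sum_congr rfl h2, ← h1, Finset.card_univ, Fintype.card_perm,
      Fintype.card_fin]
  rw [h3, T, Finset.sum_sigma]
  apply Finset.sum_congr rfl
  intro k _
  dsimp only
  rw [Finset.mul_sum]

end SIFAux

/-- **Beissinger's decomposition of permutations into SIF blocks.**
Every permutation decomposes uniquely along the stabilized-interval-free block
containing `1`, with arbitrary permutations inserted between its support elements;
consequently the generating functions `S(t) = Σ_{n≥0} n! tⁿ` and
`I(t) = Σ_{n≥0} Iₙ tⁿ` (where `Iₙ` is the number of SIF permutations of `[n]`)
satisfy `S(t) = I(t·S(t))`. -/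
theorem sif_generating_function :
    (PowerSeries.mk fun n => (Nat.factorial n : ℚ)) =
      psComp (PowerSeries.mk fun n => (sifCount n : ℚ))
        (X * PowerSeries.mk fun n => (Nat.factorial n : ℚ)) := by
  apply PowerSeries.ext
  intro n
  rw [psComp, coeff_mk, coeff_mk]
  have hQ : ((Nat.factorial n : ℕ) : ℚ) = ∑ k ∈ Finset.range (n + 1), (sifCount k : ℚ) *
      ∑ l ∈ Finset.finsuppAntidiag (Finset.range k) (n - k),
        ∏ i ∈ Finset.range k, ((Nat.factorial (l i) : ℕ) : ℚ) := by
    rw [SIFAux.key n]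
    push_cast
    apply Finset.sum_congr rfl
    intro k _
    congr 1
    apply Finset.sum_congr rfl
    intro l _
    rw [← Fin.prod_univ_eq_prod_range (fun i => ((Nat.factorial (l i) : ℕ) : ℚ)) k]
  rw [hQ]
  apply Finset.sum_congr rfl
  intro k hk
  rw [Finset.mem_range] at hk
  congr 1
  · rw [coeff_mk]
  · rw [mul_pow, coeff_X_pow_mul', if_pos (show k ≤ n by omega), coeff_pow]
    apply Finset.sum_congr rfl
    intro l _
    apply Finset.prod_congr rfl
    intro i _
    rw [coeff_mk]
end

section
/- If a connected (d+1)-colored graph G has a 2-bond consisting of two edges e, e' of color 0, then flipping e with e' produces two connected colored graphs G_L, G_R, and the total number of bicolored cycles containing color 0 satisfies C_0(G) = C_0(G_L) + C_0(G_R) − d. -/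
/-!
Flipping multiplies the colour-0 attachment by the transposition `(w₁ w₂)`, so every transition
permutation of `G` is a product of transition permutations of the flipped graph `G'` and of that
transposition. The union of the `G'`-components of `w₁` and `w₂` is stable under both, hence is
everything by connectivity of `G`; as `w₂` is not reachable from `w₁`, these two components are
`G_L` and `G_R`.

For `c ≠ 0` the `{0,c}`-transition of `G` is `(w₁ w₂)` times that of `G'`, in which `w₁` and `w₂`
lie on different cycles (they lie in different components). Multiplying a permutation by a
transposition of two points on different cycles merges those cycles, so each of the `d` colours
contributes exactly one cycle more to `C₀(G_L) + C₀(G_R)` than to `C₀(G)`.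
-/

open scoped BigOperators

/-
A `(d+1)`-colored graph (bipartite, every vertex incident to exactly one edge of each
color `0,…,d`, with `n` white and `n` black vertices, both indexed by `Fin n`) is
encoded by a family `π : Fin (d+1) → Equiv.Perm (Fin n)`: the edge of color `c` at
the white vertex `i` joins it to the black vertex `π c i`.
-/

/-- The "transition" permutation of the white vertices obtained by following the edge
of color `a` and coming back along the edge of color `b`.  Bicolored cycles with
colors `{a,b}` are exactly the orbits of `cTrans π a b`. -/
def cTrans {d n : ℕ} (π : Fin (d + 1) → Equiv.Perm (Fin n)) (a b : Fin (d + 1)) :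
    Equiv.Perm (Fin n) :=
  (π a)⁻¹ * π b

/-- The subgroup generated by all transition permutations; its orbits on white
vertices are the connected components of the colored graph. -/
def transGroup {d n : ℕ} (π : Fin (d + 1) → Equiv.Perm (Fin n)) :
    Subgroup (Equiv.Perm (Fin n)) :=
  Subgroup.closure
    (Set.range fun p : Fin (d + 1) × Fin (d + 1) => cTrans π p.1 p.2)

/-- A set `S` of white vertices is a nonempty, invariant, connected piece of the
colored graph `π`. -/
def ConnOn {d n : ℕ} (π : Fin (d + 1) → Equiv.Perm (Fin n))
    (S : Finset (Fin n)) : Prop :=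
  S.Nonempty ∧ (∀ a b : Fin (d + 1), ∀ x ∈ S, cTrans π a b x ∈ S) ∧
    ∀ x ∈ S, ∀ y ∈ S, ∃ g ∈ transGroup π, g x = y

/-- The colored graph is connected. -/
def ColConnected {d n : ℕ} (π : Fin (d + 1) → Equiv.Perm (Fin n)) : Prop :=
  ConnOn π Finset.univ

/-- The number of cycles (orbits, fixed points included) of a permutation `σ` that are
contained in an (invariant) set `S`. -/
def cyclesOn {n : ℕ} (σ : Equiv.Perm (Fin n)) (S : Finset (Fin n)) : ℕ :=
  (σ.cycleFactorsFinset.filter fun c => c.support ⊆ S).card +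
    (S.filter fun x => σ x = x).card

/-- `C₀`, restricted to the vertex set `S`: the total number of bicolored cycles with
colors `{0,c}`, `c ∈ [1..d]`, contained in `S`. -/
def C0on {d n : ℕ} (π : Fin (d + 1) → Equiv.Perm (Fin n))
    (S : Finset (Fin n)) : ℕ :=
  ∑ c ∈ Finset.univ.filter fun c : Fin (d + 1) => c ≠ 0,
    cyclesOn (cTrans π 0 c) S

open Equiv Finset

namespace Equiv.Perm

variable {α : Type*}

theorem SameCycle.mem_of_mapsTo [Finite α] {σ : Perm α} {s : Set α} (hs : Set.MapsTo σ s s)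
    {x y : α} (hx : x ∈ s) (hxy : σ.SameCycle x y) : y ∈ s := by
  obtain ⟨i, rfl⟩ := hxy.exists_nat_pow_eq
  rw [coe_pow]
  exact hs.iterate i hx

theorem SameCycle.of_forall_sameCycle_apply [Finite α] {σ τ : Perm α}
    (h : ∀ p, τ.SameCycle p (σ p)) {x y : α} (hxy : σ.SameCycle x y) : τ.SameCycle x y :=
  hxy.mem_of_mapsTo (s := {y | τ.SameCycle x y}) (fun _ hp => hp.trans (h _))
    (SameCycle.refl _ _)

theorem sameCycle_self_apply (σ : Perm α) (p : α) : σ.SameCycle p (σ p) :=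
  sameCycle_apply_right.2 (SameCycle.refl _ _)

noncomputable def numCycles (σ : Perm α) : ℕ :=
  Nat.card (Quotient (SameCycle.setoid σ))

section SwapMul

variable [DecidableEq α] {σ : Perm α} {a b : α}

theorem swap_mul_apply_of_ne {p : α} (ha : σ p ≠ a) (hb : σ p ≠ b) :
    (swap a b * σ) p = σ p :=
  swap_apply_of_ne_of_ne ha hb

variable [Finite α]

theorem sameCycle_swap_mul_of_not_sameCycle (h : ¬σ.SameCycle a b) :
    (swap a b * σ).SameCycle a b := by
  set τ := swap a b * σ
  have hτ : τ (σ.symm b) = a := by simp [τ]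
  -- Along the `σ`-cycle of `b`, `τ` agrees with `σ` until `σ.symm b`, which `τ` sends to `a`.
  have hmaps : Set.MapsTo σ {q | σ.SameCycle b q ∧ (τ.SameCycle b q ∨ τ.SameCycle b a)}
      {q | σ.SameCycle b q ∧ (τ.SameCycle b q ∨ τ.SameCycle b a)} := by
    rintro q ⟨hbq, hq | hba⟩
    · have hbσq : σ.SameCycle b (σ q) := sameCycle_apply_right.2 hbq
      refine ⟨hbσq, ?_⟩
      by_cases hσq : σ q = b
      · have : τ q = a := by simp [τ, hσq]
        exact .inr (this ▸ hq.trans (sameCycle_self_apply τ q))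
      · have hσqa : σ q ≠ a := fun e => h (e ▸ hbσq).symm
        exact .inl (swap_mul_apply_of_ne hσqa hσq ▸ hq.trans (sameCycle_self_apply τ q))
    · exact ⟨sameCycle_apply_right.2 hbq, .inr hba⟩
  have hb : σ.SameCycle b (σ.symm b) := sameCycle_symm_apply_right.2 (SameCycle.refl _ _)
  rcases (hb.mem_of_mapsTo hmaps ⟨SameCycle.refl _ _, .inl (SameCycle.refl _ _)⟩).2 with hq | hba
  · exact (hq.trans (hτ ▸ sameCycle_self_apply τ _)).symm
  · exact hba.symm

theorem SameCycle.swap_mul (h : ¬σ.SameCycle a b) {x y : α} (hxy : σ.SameCycle x y) :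
    (swap a b * σ).SameCycle x y := by
  have hab := sameCycle_swap_mul_of_not_sameCycle h
  refine hxy.of_forall_sameCycle_apply fun p => ?_
  by_cases ha : σ p = a
  · have : (swap a b * σ) p = b := by simp [ha]
    rw [ha]
    exact (this ▸ sameCycle_self_apply _ p).trans hab.symm
  by_cases hb : σ p = b
  · have : (swap a b * σ) p = a := by simp [hb]
    rw [hb]
    exact (this ▸ sameCycle_self_apply _ p).trans hab
  exact swap_mul_apply_of_ne ha hb ▸ sameCycle_self_apply _ p

theorem SameCycle.of_swap_mul {x y : α} (hxa : ¬σ.SameCycle x a) (hxb : ¬σ.SameCycle x b)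
    (hxy : (swap a b * σ).SameCycle x y) : σ.SameCycle x y := by
  refine hxy.mem_of_mapsTo (s := {y | σ.SameCycle x y}) (fun q hq => ?_) (SameCycle.refl _ _)
  have hσq : σ.SameCycle x (σ q) := sameCycle_apply_right.2 hq
  have ha : σ q ≠ a := fun e => hxa (e ▸ hσq)
  have hb : σ q ≠ b := fun e => hxb (e ▸ hσq)
  simpa [swap_mul_apply_of_ne ha hb] using hσq

theorem numCycles_eq_numCycles_swap_mul_add_one (h : ¬σ.SameCycle a b) :
    σ.numCycles = (swap a b * σ).numCycles + 1 := by
  classical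
  let B : Quotient (SameCycle.setoid σ) := ⟦b⟧
  let F : {q : Quotient (SameCycle.setoid σ) // q ≠ B} →
      Quotient (SameCycle.setoid (swap a b * σ)) :=
    fun q => Quotient.map id (fun _ _ => SameCycle.swap_mul h) q.1
  have hF : Function.Bijective F := by
    constructor
    · rintro ⟨⟨x⟩, hx⟩ ⟨⟨y⟩, hy⟩ hxy
      replace hxy : (swap a b * σ).SameCycle x y := Quotient.exact hxy
      have hxb : ¬σ.SameCycle x b := fun e => hx (Quotient.sound e)
      have hyb : ¬σ.SameCycle y b := fun e => hy (Quotient.sound e)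
      refine Subtype.ext (Quotient.sound ?_)
      by_cases hxa : σ.SameCycle x a
      · by_cases hya : σ.SameCycle y a
        · exact hxa.trans hya.symm
        · exact (hxy.symm.of_swap_mul hya hyb).symm
      · exact hxy.of_swap_mul hxa hxb
    · rintro ⟨z⟩
      by_cases hz : σ.SameCycle z b
      · refine ⟨⟨⟦a⟧, fun e => h (Quotient.exact e)⟩, Quotient.sound ?_⟩
        exact (sameCycle_swap_mul_of_not_sameCycle h).trans (hz.swap_mul h).symm
      · exact ⟨⟨⟦z⟧, fun e => hz (Quotient.exact e)⟩, rfl⟩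
  rw [numCycles, ← Nat.card_congr (optionSubtypeNe B), Finite.card_option,
    Nat.card_eq_of_bijective F hF, numCycles]

end SwapMul

theorem numCycles_eq_card_cycleFactorsFinset_add [Fintype α] [DecidableEq α] (σ : Perm α) :
    σ.numCycles = #σ.cycleFactorsFinset + #{x | σ x = x} := by
  let f : α → σ.cycleFactorsFinset ⊕ {x // σ x = x} := fun x =>
    if hx : σ x = x then .inr ⟨x, hx⟩
    else .inl ⟨σ.cycleOf x, cycleOf_mem_cycleFactorsFinset_iff.2 (mem_support.2 hx)⟩
  have hker : SameCycle.setoid σ = Setoid.ker f := by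
    ext x y
    change σ.SameCycle x y ↔ f x = f y
    by_cases hx : σ x = x <;> by_cases hy : σ y = y
    · simp only [f, dif_pos hx, dif_pos hy, Sum.inr.injEq, Subtype.mk.injEq]
      exact ⟨fun e => e.eq_of_left hx, fun e => e ▸ SameCycle.refl _ _⟩
    · simpa [f, hx, hy] using fun e : σ.SameCycle x y => hy (e.apply_eq_self_iff.1 hx)
    · simpa [f, hx, hy] using fun e : σ.SameCycle x y => hx (e.apply_eq_self_iff.2 hy)
    · simp only [f, dif_neg hx, dif_neg hy, Sum.inl.injEq, Subtype.mk.injEq]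
      exact sameCycle_iff_cycleOf_eq_of_mem_support (mem_support.2 hx) (mem_support.2 hy)
  have hf : Function.Surjective f := by
    rintro (⟨c, hc⟩ | ⟨x, hx⟩)
    · obtain ⟨x, hx⟩ := (mem_cycleFactorsFinset_iff.1 hc).1.nonempty_support
      have hσx : σ x ≠ x := mem_support.1 (mem_cycleFactorsFinset_support_le hc hx)
      exact ⟨x, by simp [f, hσx, cycle_is_cycleOf hx hc]⟩
    · exact ⟨x, by simp [f, hx]⟩
  rw [numCycles, hker, Nat.card_congr (Setoid.quotientKerEquivOfSurjective f hf), Nat.card_sum,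
    Nat.card_eq_fintype_card, Nat.card_eq_fintype_card, Fintype.card_coe, Fintype.card_subtype]

end Equiv.Perm

theorem cyclesOn_univ {n : ℕ} (σ : Perm (Fin n)) : cyclesOn σ univ = σ.numCycles := by
  simp only [cyclesOn, subset_univ, filter_true, Perm.numCycles_eq_card_cycleFactorsFinset_add]

theorem cyclesOn_add_cyclesOn_compl {n : ℕ} {σ : Perm (Fin n)} {S : Finset (Fin n)}
    (hS : ∀ x ∈ S, σ x ∈ S) : cyclesOn σ S + cyclesOn σ Sᶜ = cyclesOn σ univ := by
  have hclosed : ∀ {x y}, σ.SameCycle x y → x ∈ S → y ∈ S := fun hxy hx =>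
    hxy.mem_of_mapsTo (s := (S : Set (Fin n))) hS hx
  have hcycles : ∀ c ∈ σ.cycleFactorsFinset, c.support ⊆ Sᶜ ↔ ¬c.support ⊆ S := by
    intro c hc
    have hsc := Perm.isCycleOn_support_of_mem_cycleFactorsFinset hc
    obtain ⟨x, hx⟩ := (Perm.mem_cycleFactorsFinset_iff.1 hc).1.nonempty_support
    refine ⟨fun hSc hSc' => mem_compl.1 (hSc hx) (hSc' hx), fun hnot y hy => ?_⟩
    exact mem_compl.2 fun hyS => hnot fun z hz => hclosed (hsc.2 hy hz) hyS
  have hfix : #(S.filter fun x => σ x = x) + #(Sᶜ.filter fun x => σ x = x)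
      = #(univ.filter fun x => σ x = x) := by
    rw [← card_union_of_disjoint (disjoint_filter_filter disjoint_compl_right), ← filter_union,
      union_compl]
  have hfac : #(σ.cycleFactorsFinset.filter fun c => c.support ⊆ S)
      + #(σ.cycleFactorsFinset.filter fun c => c.support ⊆ Sᶜ) = #σ.cycleFactorsFinset := by
    rw [filter_congr hcycles, card_filter_add_card_filter_not]
  simp only [cyclesOn, subset_univ, filter_true]
  omega

section Orbits

open Subgroup Pointwise

variable {α : Type*} [Fintype α]

noncomputable def orbitFinset (H : Subgroup (Perm α)) (w : α) : Finset α := by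
  classical exact {x | ∃ g ∈ H, g w = x}

variable {H : Subgroup (Perm α)} {w x : α}

@[simp]
theorem mem_orbitFinset : x ∈ orbitFinset H w ↔ ∃ g ∈ H, g w = x := by
  classical simp [orbitFinset]

theorem mem_orbitFinset_self : w ∈ orbitFinset H w :=
  mem_orbitFinset.2 ⟨1, H.one_mem, rfl⟩

theorem apply_mem_orbitFinset {g : Perm α} (hg : g ∈ H) (hx : x ∈ orbitFinset H w) :
    g x ∈ orbitFinset H w := by
  obtain ⟨k, hk, rfl⟩ := mem_orbitFinset.1 hx
  exact mem_orbitFinset.2 ⟨g * k, H.mul_mem hg hk, rfl⟩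

theorem Equiv.Perm.SameCycle.mem_orbitFinset {g : Perm α} (hg : g ∈ H) {y : α}
    (h : g.SameCycle x y) : y ∈ orbitFinset H x := by
  obtain ⟨i, hi⟩ := h
  exact _root_.mem_orbitFinset.2 ⟨g ^ i, H.zpow_mem hg i, hi⟩

theorem compl_orbitFinset_eq [DecidableEq α] {a b : α}
    (hcover : ∀ x, x ∈ orbitFinset H a ∪ orbitFinset H b) (hab : b ∉ orbitFinset H a) :
    (orbitFinset H a)ᶜ = orbitFinset H b := by
  ext x
  refine ⟨fun hx => (mem_union.1 (hcover x)).resolve_left (mem_compl.1 hx), fun hx => ?_⟩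
  refine mem_compl.2 fun hxa => hab ?_
  obtain ⟨g, hg, rfl⟩ := mem_orbitFinset.1 hx
  simpa using apply_mem_orbitFinset (H.inv_mem hg) hxa

-- A finite set mapped into itself by each generator is mapped onto itself, hence is stable
-- under the generated group.
theorem orbitFinset_sup_zpowers_swap_subset [DecidableEq α] (a b : α) :
    orbitFinset (H ⊔ zpowers (swap a b)) a ⊆ orbitFinset H a ∪ orbitFinset H b := by
  set T := orbitFinset H a ∪ orbitFinset H b
  have hmem : ∀ {g : Perm α}, (∀ x ∈ T, g x ∈ T) → g ∈ MulAction.stabilizer (Perm α) (T : Set α) :=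
    fun h => (MulAction.mem_stabilizer_set' T.finite_toSet).2 h
  have hle : H ⊔ zpowers (swap a b) ≤ MulAction.stabilizer (Perm α) (T : Set α) := by
    refine sup_le (fun g hg => hmem fun x hx => ?_) (zpowers_le.2 (hmem fun x hx => ?_))
    · exact mem_union.2 ((mem_union.1 hx).imp (apply_mem_orbitFinset hg) (apply_mem_orbitFinset hg))
    · rcases eq_or_ne x a with rfl | hxa
      · exact mem_union_right _ (by simpa using mem_orbitFinset_self)
      rcases eq_or_ne x b with rfl | hxb
      · exact mem_union_left _ (by simpa using mem_orbitFinset_self)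
      rwa [swap_apply_of_ne_of_ne hxa hxb]
  intro x hx
  obtain ⟨g, hg, rfl⟩ := mem_orbitFinset.1 hx
  exact (MulAction.mem_stabilizer_set' T.finite_toSet).1 (hle hg)
    (mem_union_left _ mem_orbitFinset_self)

end Orbits

section ColoredGraph

variable {d n : ℕ}

theorem cTrans_mem_transGroup (π : Fin (d + 1) → Perm (Fin n)) (a b : Fin (d + 1)) :
    cTrans π a b ∈ transGroup π :=
  Subgroup.subset_closure ⟨(a, b), rfl⟩

theorem cTrans_eq_mul_cTrans_mul (π s : Fin (d + 1) → Perm (Fin n)) (a b : Fin (d + 1)) :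
    cTrans π a b = s a * cTrans (π * s) a b * (s b)⁻¹ := by
  simp only [cTrans, Pi.mul_apply]
  group

theorem transGroup_le_sup {π s : Fin (d + 1) → Perm (Fin n)} {K : Subgroup (Perm (Fin n))}
    (hs : ∀ c, s c ∈ K) : transGroup π ≤ transGroup (π * s) ⊔ K := by
  refine (Subgroup.closure_le _).2 ?_
  rintro _ ⟨⟨a, b⟩, rfl⟩
  change cTrans π a b ∈ _
  rw [cTrans_eq_mul_cTrans_mul π s]
  exact mul_mem (mul_mem (Subgroup.mem_sup_right (hs a))
    (Subgroup.mem_sup_left (cTrans_mem_transGroup _ a b))) (inv_mem (Subgroup.mem_sup_right (hs b)))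

theorem connOn_orbitFinset (π : Fin (d + 1) → Perm (Fin n)) (w : Fin n) :
    ConnOn π (orbitFinset (transGroup π) w) := by
  refine ⟨⟨w, mem_orbitFinset_self⟩, fun a b x hx =>
    apply_mem_orbitFinset (cTrans_mem_transGroup π a b) hx, fun x hx y hy => ?_⟩
  obtain ⟨g, hg, rfl⟩ := mem_orbitFinset.1 hx
  obtain ⟨g', hg', rfl⟩ := mem_orbitFinset.1 hy
  exact ⟨g' * g⁻¹, mul_mem hg' (inv_mem hg), by simp⟩

theorem C0on_add_C0on_compl {π : Fin (d + 1) → Perm (Fin n)} {S : Finset (Fin n)}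
    (hS : ∀ c, ∀ x ∈ S, cTrans π 0 c x ∈ S) : C0on π S + C0on π Sᶜ = C0on π univ := by
  simp only [C0on, ← sum_add_distrib, cyclesOn_add_cyclesOn_compl (hS _)]

theorem card_filter_ne_zero : #(univ.filter fun c : Fin (d + 1) => c ≠ 0) = d := by
  rw [filter_ne', card_erase_of_mem (mem_univ _), card_univ, Fintype.card_fin,
    add_tsub_cancel_right]

theorem C0on_univ_mul_mulSingle_swap (π : Fin (d + 1) → Perm (Fin n)) {a b : Fin n}
    (h : ∀ c ≠ 0, ¬(cTrans (π * Pi.mulSingle (0 : Fin (d + 1)) (swap a b)) 0 c).SameCycle a b) :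
    C0on (π * Pi.mulSingle (0 : Fin (d + 1)) (swap a b)) univ = C0on π univ + d := by
  have hc : ∀ c ∈ univ.filter fun c : Fin (d + 1) => c ≠ 0,
      cyclesOn (cTrans (π * Pi.mulSingle (0 : Fin (d + 1)) (swap a b)) 0 c) univ
        = cyclesOn (cTrans π 0 c) univ + 1 := by
    intro c hc
    have hc0 : c ≠ 0 := (mem_filter.1 hc).2
    rw [cTrans_eq_mul_cTrans_mul π (Pi.mulSingle (0 : Fin (d + 1)) (swap a b)) 0 c,
      cyclesOn_univ, cyclesOn_univ]
    simpa [hc0] using Perm.numCycles_eq_numCycles_swap_mul_add_one (h c hc0)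
  rw [C0on, sum_congr rfl hc, sum_add_distrib, sum_const, card_filter_ne_zero, smul_eq_mul,
    mul_one, C0on]

end ColoredGraph

theorem two_bond_flip_general (d n : ℕ) (π : Fin (d + 1) → Equiv.Perm (Fin n))
    (w₁ w₂ : Fin n)
    (hconn : ColConnected π)
    (π' : Fin (d + 1) → Equiv.Perm (Fin n))
    (hπ' : π' = fun c => if c = 0 then π 0 * Equiv.swap w₁ w₂ else π c)
    (hcut : ¬ ∃ g ∈ transGroup π', g w₁ = w₂) :
    ∃ S : Finset (Fin n), w₁ ∈ S ∧ w₂ ∉ S ∧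
      ConnOn π' S ∧ ConnOn π' Sᶜ ∧
      C0on π Finset.univ + d = C0on π' S + C0on π' Sᶜ := by
  replace hπ' : π' = π * Pi.mulSingle (0 : Fin (d + 1)) (swap w₁ w₂) := by
    subst hπ'
    funext c
    by_cases hc : c = 0 <;> simp [hc]
  subst hπ'
  set π' := π * Pi.mulSingle (0 : Fin (d + 1)) (swap w₁ w₂)
  set S := orbitFinset (transGroup π') w₁
  have hw₂ : w₂ ∉ S := by simpa [S] using hcut
  have hcover (x : Fin n) : x ∈ S ∪ orbitFinset (transGroup π') w₂ := by
    obtain ⟨g, hg, rfl⟩ := hconn.2.2 w₁ (mem_univ _) x (mem_univ _)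
    refine orbitFinset_sup_zpowers_swap_subset w₁ w₂ (mem_orbitFinset.2 ⟨g, ?_, rfl⟩)
    refine transGroup_le_sup (fun c => ?_) hg
    rw [Pi.mulSingle_apply]
    split_ifs
    exacts [Subgroup.mem_zpowers _, one_mem _]
  have hSconn : ConnOn π' S := connOn_orbitFinset π' w₁
  have hsep : ∀ c ≠ 0, ¬(cTrans π' 0 c).SameCycle w₁ w₂ :=
    fun c _ h => hw₂ (h.mem_orbitFinset (cTrans_mem_transGroup π' 0 c))
  refine ⟨S, mem_orbitFinset_self, hw₂, hSconn,
    compl_orbitFinset_eq hcover hw₂ ▸ connOn_orbitFinset π' w₂, ?_⟩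
  rw [C0on_add_C0on_compl fun c => hSconn.2.1 0 c, C0on_univ_mul_mulSingle_swap π hsep]

/-- **2-bond flip for colored graphs.**
Let `G` be a connected `(d+1)`-colored graph and let `e, e'` be the color-0 edges at
the white vertices `w₁, w₂`.  Let `G'` be the graph obtained by flipping `e` with `e'`
(color-0 attachment composed with the swap of `w₁` and `w₂`).  If `{e, e'}` is a
2-bond (i.e. the flipped graph separates `w₁` from `w₂`), then `G'` consists of two
connected colored graphs `G_L` (vertices `S ∋ w₁`) and `G_R` (vertices `Sᶜ ∋ w₂`),
and the numbers of bicolored cycles through color 0 satisfy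
`C₀(G) = C₀(G_L) + C₀(G_R) − d` (written additively to avoid truncated subtraction). -/
theorem two_bond_flip (d n : ℕ) (π : Fin (d + 1) → Equiv.Perm (Fin n))
    (w₁ w₂ : Fin n) (hw : w₁ ≠ w₂)
    (hconn : ColConnected π)
    (π' : Fin (d + 1) → Equiv.Perm (Fin n))
    (hπ' : π' = fun c => if c = 0 then π 0 * Equiv.swap w₁ w₂ else π c)
    (hcut : ¬ ∃ g ∈ transGroup π', g w₁ = w₂) :
    ∃ S : Finset (Fin n), w₁ ∈ S ∧ w₂ ∉ S ∧
      ConnOn π' S ∧ ConnOn π' Sᶜ ∧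
      C0on π Finset.univ + d = C0on π' S + C0on π' Sᶜ :=
  two_bond_flip_general d n π w₁ w₂ hconn π' hπ' hcut
end

section
/- Let λ be a partition with ℓ(λ) ≤ n and set ρ_i = λ_i − i. Then the product formula so_λ(1^{2n}) = Π_{1≤i<j≤n} (ρ_i − ρ_j)(ρ_i + ρ_j + 2n)/((j − i)(2n − i − j)) defines a positive integer (the dimension of the irreducible representation of SO(2n) with highest weight λ). -/
open Finset Polynomial

/-- The integer values `e_b(x) = (2/(2b)!)·∏_{s<b}(x²-s²)` expressed via binomials. -/
def evB (b x : ℕ) : ℕ :=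
  if b = 0 then 1 else (x + b).choose (2 * b) + (x + b - 1).choose (2 * b)

/-- The scaling factor `(2b)!/2` (and `1` for `b = 0`). -/
def dB (b : ℕ) : ℚ := if b = 0 then 1 else (Nat.factorial (2 * b) : ℚ) / 2

/-- The monic polynomial `∏_{s<b} (X - s²)`. -/
noncomputable def QB (b : ℕ) : Polynomial ℚ :=
  ∏ s ∈ Finset.range b, (X - C ((s : ℚ) ^ 2))

lemma QB_monic (b : ℕ) : (QB b).Monic :=
  monic_prod_of_monic _ _ fun s _ => monic_X_sub_C _

lemma QB_natDegree (b : ℕ) : (QB b).natDegree = b := by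
  rw [QB, natDegree_prod_of_monic _ _ fun s _ => monic_X_sub_C _]
  simp only [natDegree_X_sub_C, Finset.sum_const, Finset.card_range, smul_eq_mul, mul_one]

lemma dB_ne_zero (b : ℕ) : dB b ≠ 0 := by
  unfold dB
  split
  · norm_num
  · positivity

lemma fact_pred (k : ℕ) (hk : 1 ≤ k) :
    (Nat.factorial k : ℚ) = (k : ℚ) * (Nat.factorial (k - 1) : ℚ) := by
  conv_lhs => rw [show k = (k - 1) + 1 from by omega, Nat.factorial_succ]
  rw [show (k - 1) + 1 = k from by omega]
  push_cast
  ring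

lemma prod_sq (b : ℕ) : ∀ m : ℕ, 1 ≤ m + b →
    (∏ s ∈ Finset.range b, (((m + b : ℕ) : ℚ) ^ 2 - (s : ℚ) ^ 2)) * (Nat.factorial m : ℚ)
      = ((m + b : ℕ) : ℚ) * (Nat.factorial (m + 2 * b - 1) : ℚ) := by
  induction b with
  | zero =>
      intro m h
      simp only [Finset.range_zero, Finset.prod_empty, one_mul, Nat.add_zero, Nat.mul_zero]
      have h1 : m = (m - 1) + 1 := by omega
      conv_lhs => rw [h1, Nat.factorial_succ]
      rw [show (m - 1) + 1 = m from by omega]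
      push_cast
      ring
  | succ b ih =>
      intro m _
      have ihm := ih (m + 1) (by omega)
      rw [show m + 1 + 2 * b - 1 = m + 2 * b from by omega] at ihm
      rw [Nat.factorial_succ m] at ihm
      rw [show m + (b + 1) = m + 1 + b from by omega,
        show m + 2 * (b + 1) - 1 = m + 2 * b + 1 from by omega,
        Finset.prod_range_succ, Nat.factorial_succ (m + 2 * b)]
      push_cast at ihm ⊢
      linear_combination ((m : ℚ) + 2 * b + 1) * ihm

lemma QB_eval (b x : ℕ) : (QB b).eval (((x : ℕ) : ℚ) ^ 2) = dB b * (evB b x : ℚ) := by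
  rcases Nat.eq_zero_or_pos b with hb | hb
  · subst hb; simp [QB, dB, evB]
  have hb0 : b ≠ 0 := by omega
  have heval : (QB b).eval (((x : ℕ) : ℚ) ^ 2)
      = ∏ s ∈ Finset.range b, ((x : ℚ) ^ 2 - (s : ℚ) ^ 2) := by
    simp [QB, eval_prod]
  rw [heval, dB, evB, if_neg hb0, if_neg hb0, Nat.cast_add]
  rcases lt_or_ge x b with hxb | hxb
  · rw [Finset.prod_eq_zero (Finset.mem_range.mpr hxb) (by ring)]
    rw [Nat.choose_eq_zero_of_lt (by omega), Nat.choose_eq_zero_of_lt (by omega)]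
    norm_num
  · obtain ⟨m, rfl⟩ : ∃ m, x = m + b := ⟨x - b, by omega⟩
    have key := prod_sq b m (by omega)
    have hfm : (Nat.factorial m : ℚ) ≠ 0 := by positivity
    rcases Nat.eq_zero_or_pos m with hm | hm
    · subst hm
      simp only [Nat.zero_add, Nat.factorial_zero, Nat.cast_one, mul_one] at key ⊢
      rw [key]
      rw [show b + b = 2 * b from by omega, Nat.choose_self,
        Nat.choose_eq_zero_of_lt (by omega), fact_pred (2 * b) (by omega)]
      push_cast
      ring
    · have hc1 : (((m + b) + b).choose (2 * b) : ℚ)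
          = (Nat.factorial (m + 2 * b) : ℚ) / (Nat.factorial (2 * b) * Nat.factorial m) := by
        rw [show (m + b) + b = m + 2 * b from by omega, Nat.cast_choose ℚ (by omega)]
        rw [show m + 2 * b - 2 * b = m from by omega]
      have hc2 : (((m + b) + b - 1).choose (2 * b) : ℚ)
          = (Nat.factorial (m + 2 * b - 1) : ℚ)
            / (Nat.factorial (2 * b) * Nat.factorial (m - 1)) := by
        rw [show (m + b) + b - 1 = m + 2 * b - 1 from by omega, Nat.cast_choose ℚ (by omega)]
        rw [show m + 2 * b - 1 - 2 * b = m - 1 from by omega]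
      have hP : (∏ s ∈ Finset.range b, (((m + b : ℕ) : ℚ) ^ 2 - (s : ℚ) ^ 2))
          = ((m + b : ℕ) : ℚ) * (Nat.factorial (m + 2 * b - 1) : ℚ) / (Nat.factorial m : ℚ) := by
        rw [eq_div_iff hfm]; exact key
      rw [hP, hc1, hc2, fact_pred (m + 2 * b) (by omega), fact_pred m hm]
      have hfm1 : (Nat.factorial (m - 1) : ℚ) ≠ 0 := by positivity
      have hf2b : (Nat.factorial (2 * b) : ℚ) ≠ 0 := by positivity
      have hm0 : (m : ℚ) ≠ 0 := by positivity
      push_cast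
      field_simp
      ring

lemma evB_eq_zero {b x : ℕ} (h : x < b) : evB b x = 0 := by
  unfold evB
  rw [if_neg (by omega), Nat.choose_eq_zero_of_lt (by omega),
    Nat.choose_eq_zero_of_lt (by omega)]

lemma evB_diag (b : ℕ) : evB b b = 1 := by
  unfold evB
  rcases Nat.eq_zero_or_pos b with hb | hb
  · simp [hb]
  · rw [if_neg (by omega), show b + b = 2 * b from by omega, Nat.choose_self,
      Nat.choose_eq_zero_of_lt (by omega)]

/-- The key determinantal identity. -/
lemma prod_eq_det (n : ℕ) (w : Fin n → ℕ) :
    (∏ i : Fin n, ∏ j ∈ Finset.Ioi i, (((w j : ℕ) : ℚ) ^ 2 - ((w i : ℕ) : ℚ) ^ 2))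
      = (∏ j : Fin n, dB (j : ℕ)) *
        ((Matrix.of fun i j : Fin n => ((evB (j : ℕ) (w i) : ℕ) : ℚ)).det) := by
  have h := Matrix.det_eval_matrixOfPolynomials_eq_det_vandermonde
      (fun i => ((w i : ℕ) : ℚ) ^ 2) (fun j : Fin n => QB (j : ℕ))
      (fun j => QB_natDegree _) (fun j => QB_monic _)
  rw [← Matrix.det_vandermonde, h]
  have h2 : (Matrix.of fun i j : Fin n => (QB (j : ℕ)).eval (((w i : ℕ) : ℚ) ^ 2))
      = Matrix.of fun i j : Fin n =>
          (fun jj : Fin n => dB (jj : ℕ)) j *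
            ((Matrix.of fun i j : Fin n => ((evB (j : ℕ) (w i) : ℕ) : ℚ)) i j) := by
    ext i j
    exact QB_eval _ _
  rw [h2, Matrix.det_mul_row]

/-- The triangular determinant. -/
lemma det_evB_triangle (n : ℕ) :
    (Matrix.of fun i j : Fin n => ((evB (j : ℕ) (i : ℕ) : ℕ) : ℤ)).det = 1 := by
  rw [Matrix.det_of_lowerTriangular _ ?h]
  · rw [Finset.prod_congr rfl fun i _ => ?_, Finset.prod_const_one]
    simp [evB_diag]
  case h =>
    intro i j hij
    have : (i : ℕ) < (j : ℕ) := hij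
    simp [Matrix.of_apply, evB_eq_zero this]

/-- **Weyl dimension formula for `SO(2n)`.**
For a partition `λ = (λ₁ ≥ … ≥ λₙ ≥ 0)` of length at most `n` (encoded as an antitone
function `Fin n → ℕ`), setting `ρᵢ = λᵢ − i` (with rows indexed `1, …, n`), the product
`Π_{1≤i<j≤n} (ρᵢ − ρⱼ)(ρᵢ + ρⱼ + 2n) / ((j − i)(2n − i − j))`
is a positive integer (the dimension of the irreducible representation of `SO(2n)` with
highest weight `λ`). -/
theorem weyl_dimension_so_even_integral
    (n : ℕ) (hn : 1 ≤ n) (lam : Fin n → ℕ)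
    (hmono : ∀ i j : Fin n, i ≤ j → lam j ≤ lam i) :
    ∃ k : ℕ, 0 < k ∧
      (∏ i : Fin n, ∏ j : Fin n,
        if i < j then
          (((lam i : ℚ) - ((i : ℕ) + 1)) - ((lam j : ℚ) - ((j : ℕ) + 1))) *
            (((lam i : ℚ) - ((i : ℕ) + 1)) + ((lam j : ℚ) - ((j : ℕ) + 1)) + 2 * n) /
            ((((j : ℕ) : ℚ) - ((i : ℕ) : ℚ)) *
              (2 * (n : ℚ) - (((i : ℕ) : ℚ) + 1) - (((j : ℕ) : ℚ) + 1)))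
        else 1) = (k : ℚ) := by
  classical
  set μ : Fin n → ℕ := fun i => lam i + (n - 1 - (i : ℕ)) with hμdef
  set w0 : Fin n → ℕ := fun i => n - 1 - (i : ℕ) with hw0def
  set y : Fin n → ℚ := fun i => ((μ i : ℕ) : ℚ) ^ 2 with hydef
  set z : Fin n → ℚ := fun i => ((w0 i : ℕ) : ℚ) ^ 2 with hzdef
  -- cast lemmas
  have hcastμ : ∀ i : Fin n, ((μ i : ℕ) : ℚ) = (lam i : ℚ) + (n : ℚ) - 1 - ((i : ℕ) : ℚ) := by
    intro i
    have hi : (i : ℕ) + 1 ≤ n := i.isLt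
    simp only [hμdef]
    rw [show n - 1 - (i : ℕ) = n - (1 + (i : ℕ)) from by omega, Nat.cast_add,
      Nat.cast_sub (by omega)]
    push_cast
    ring
  have hcastw0 : ∀ i : Fin n, ((w0 i : ℕ) : ℚ) = (n : ℚ) - 1 - ((i : ℕ) : ℚ) := by
    intro i
    have hi : (i : ℕ) + 1 ≤ n := i.isLt
    simp only [hw0def]
    rw [show n - 1 - (i : ℕ) = n - (1 + (i : ℕ)) from by omega, Nat.cast_sub (by omega)]
    push_cast
    ring
  -- strict monotonicity
  have hμlt : ∀ i j : Fin n, i < j → μ j < μ i := by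
    intro i j hij
    have h1 : lam j ≤ lam i := hmono i j hij.le
    have h2 : (i : ℕ) < (j : ℕ) := hij
    have h3 : (j : ℕ) < n := j.isLt
    simp only [hμdef]
    omega
  have hw0lt : ∀ i j : Fin n, i < j → w0 j < w0 i := by
    intro i j hij
    have h2 : (i : ℕ) < (j : ℕ) := hij
    have h3 : (j : ℕ) < n := j.isLt
    simp only [hw0def]
    omega
  have hylt : ∀ i j : Fin n, i < j → y j < y i := by
    intro i j hij
    simp only [hydef]
    have h0 : ((μ j : ℕ) : ℚ) < ((μ i : ℕ) : ℚ) := by exact_mod_cast hμlt i j hij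
    have h1 : (0 : ℚ) ≤ ((μ j : ℕ) : ℚ) := by positivity
    exact pow_lt_pow_left₀ h0 h1 (by norm_num)
  have hzlt : ∀ i j : Fin n, i < j → z j < z i := by
    intro i j hij
    simp only [hzdef]
    have h0 : ((w0 j : ℕ) : ℚ) < ((w0 i : ℕ) : ℚ) := by exact_mod_cast hw0lt i j hij
    have h1 : (0 : ℚ) ≤ ((w0 j : ℕ) : ℚ) := by positivity
    exact pow_lt_pow_left₀ h0 h1 (by norm_num)
  -- Step A : rewrite the product
  have hstepA : (∏ i : Fin n, ∏ j : Fin n,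
      if i < j then
        (((lam i : ℚ) - ((i : ℕ) + 1)) - ((lam j : ℚ) - ((j : ℕ) + 1))) *
          (((lam i : ℚ) - ((i : ℕ) + 1)) + ((lam j : ℚ) - ((j : ℕ) + 1)) + 2 * n) /
          ((((j : ℕ) : ℚ) - ((i : ℕ) : ℚ)) *
            (2 * (n : ℚ) - (((i : ℕ) : ℚ) + 1) - (((j : ℕ) : ℚ) + 1)))
      else 1)
      = ∏ i : Fin n, ∏ j ∈ Finset.Ioi i, ((y j - y i) / (z j - z i)) := by
    refine Finset.prod_congr rfl fun i _ => ?_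
    have hIoi : Finset.Ioi i = Finset.univ.filter (fun j => i < j) := by
      ext j; simp
    rw [hIoi, Finset.prod_filter]
    refine Finset.prod_congr rfl fun j _ => ?_
    by_cases hij : i < j
    · rw [if_pos hij, if_pos hij]
      have hnum : (((lam i : ℚ) - ((i : ℕ) + 1)) - ((lam j : ℚ) - ((j : ℕ) + 1))) *
          (((lam i : ℚ) - ((i : ℕ) + 1)) + ((lam j : ℚ) - ((j : ℕ) + 1)) + 2 * n)
          = y i - y j := by
        simp only [hydef]
        rw [hcastμ i, hcastμ j]
        ring
      have hden : ((((j : ℕ) : ℚ) - ((i : ℕ) : ℚ)) *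
          (2 * (n : ℚ) - (((i : ℕ) : ℚ) + 1) - (((j : ℕ) : ℚ) + 1))) = z i - z j := by
        simp only [hzdef]
        rw [hcastw0 i, hcastw0 j]
        ring
      rw [hnum, hden, show y j - y i = -(y i - y j) from by ring,
        show z j - z i = -(z i - z j) from by ring, neg_div_neg_eq]
    · rw [if_neg hij, if_neg hij]
  -- positivity
  have hpos : 0 < ∏ i : Fin n, ∏ j ∈ Finset.Ioi i, ((y j - y i) / (z j - z i)) := by
    refine Finset.prod_pos fun i _ => Finset.prod_pos fun j hj => ?_
    have hij : i < j := Finset.mem_Ioi.mp hj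
    exact div_pos_of_neg_of_neg (sub_neg.mpr (hylt i j hij)) (sub_neg.mpr (hzlt i j hij))
  -- Step B : split the quotient
  have hstepB : (∏ i : Fin n, ∏ j ∈ Finset.Ioi i, ((y j - y i) / (z j - z i)))
      = (∏ i : Fin n, ∏ j ∈ Finset.Ioi i, (y j - y i)) /
        (∏ i : Fin n, ∏ j ∈ Finset.Ioi i, (z j - z i)) := by
    simp_rw [Finset.prod_div_distrib]
  -- determinants
  set Ey : Matrix (Fin n) (Fin n) ℤ :=
    Matrix.of fun i j : Fin n => ((evB (j : ℕ) (μ i) : ℕ) : ℤ) with hEy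
  set Ez : Matrix (Fin n) (Fin n) ℤ :=
    Matrix.of fun i j : Fin n => ((evB (j : ℕ) (w0 i) : ℕ) : ℤ) with hEz
  have hcastdet : ∀ (E : Matrix (Fin n) (Fin n) ℤ),
      ((E.det : ℤ) : ℚ) = (Matrix.of fun i j : Fin n => ((E i j : ℤ) : ℚ)).det := by
    intro E
    have h1 : (Matrix.of fun i j : Fin n => ((E i j : ℤ) : ℚ)) = E.map (Int.castRingHom ℚ) := rfl
    rw [h1]
    exact RingHom.map_det (Int.castRingHom ℚ) E
  have hnum : (∏ i : Fin n, ∏ j ∈ Finset.Ioi i, (y j - y i))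
      = (∏ j : Fin n, dB (j : ℕ)) * ((Ey.det : ℤ) : ℚ) := by
    rw [hcastdet Ey]
    simp only [hydef]
    rw [prod_eq_det n μ]
    congr 2
  have hden : (∏ i : Fin n, ∏ j ∈ Finset.Ioi i, (z j - z i))
      = (∏ j : Fin n, dB (j : ℕ)) * ((Ez.det : ℤ) : ℚ) := by
    rw [hcastdet Ez]
    simp only [hzdef]
    rw [prod_eq_det n w0]
    congr 2
  -- det Ez = sign of reversal
  set σ : Equiv.Perm (Fin n) := Fin.revPerm with hσ
  set ε : ℤ := (Equiv.Perm.sign σ : ℤ) with hε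
  have hcases : ε = 1 ∨ ε = -1 := by
    rcases Int.units_eq_one_or (Equiv.Perm.sign σ) with h | h
    · left; rw [hε, h]; rfl
    · right; rw [hε, h]; rfl
  have hεsq : ε * ε = 1 := by
    rcases hcases with h | h <;> rw [h] <;> norm_num
  have hEzperm : (Ez.submatrix σ id) = Matrix.of fun i j : Fin n => ((evB (j : ℕ) (i : ℕ) : ℕ) : ℤ) := by
    ext i j
    have h1 : ((σ i : Fin n) : ℕ) = n - 1 - (i : ℕ) := by
      simp [hσ, Fin.val_rev]
      omega
    simp only [Matrix.submatrix_apply, id, hEz, Matrix.of_apply, hw0def]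
    rw [h1]
    congr 2
    have := i.isLt
    omega
  have hdetEz : Ez.det = ε := by
    have h := Matrix.det_permute σ Ez
    rw [hEzperm, det_evB_triangle n, ← hε] at h
    simp only [Int.cast_id] at h
    rcases hcases with h1 | h1 <;> rw [h1] at h ⊢ <;> omega
  -- final combination
  set m : ℤ := Ey.det * ε with hm
  have hPd : (∏ j : Fin n, dB (j : ℕ)) ≠ 0 := Finset.prod_ne_zero_iff.mpr fun j _ => dB_ne_zero _
  have hεQ : (ε : ℚ) * (ε : ℚ) = 1 := by exact_mod_cast congrArg (fun t : ℤ => (t : ℚ)) hεsq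
  have hεne : (ε : ℚ) ≠ 0 := by
    intro h0
    rw [h0, mul_zero] at hεQ
    norm_num at hεQ
  have hfinal : (∏ i : Fin n, ∏ j ∈ Finset.Ioi i, ((y j - y i) / (z j - z i))) = ((m : ℤ) : ℚ) := by
    rw [hstepB, hnum, hden, hdetEz, hm]
    rw [mul_div_mul_left _ _ hPd]
    rw [Int.cast_mul]
    rw [div_eq_iff hεne]
    linear_combination (-(Ey.det : ℚ)) * hεQ
  refine ⟨m.toNat, ?_, ?_⟩
  · have : (0 : ℚ) < ((m : ℤ) : ℚ) := hfinal ▸ hpos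
    have hm0 : 0 < m := by exact_mod_cast this
    omega
  · rw [hstepA, hfinal]
    have hm0 : 0 < m := by
      have : (0 : ℚ) < ((m : ℤ) : ℚ) := hfinal ▸ hpos
      exact_mod_cast this
    rw [show ((m.toNat : ℕ) : ℚ) = ((m.toNat : ℤ) : ℚ) from by push_cast; ring,
      Int.toNat_of_nonneg hm0.le]
end
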